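/- arXiv:2003.02002 — 12 statements merged into one kernel-verified Lean document; each statement's English description precedes it below -/
import Mathlib

section
/- Let K be a field, let n+1 = 2k be even, and let V be an (n+1)-dimensional K-vector space. For any subspaces U_1, …, U_n and W_1, …, W_n of V with dim(U_i) = dim(W_i) = i for all i, the sum of Grassmann distances satisfies Σ_{i=1}^{n} d(U_i, W_i) ≤ k². -/
open Module

lemma sum_min_eq_sq (k : ℕ) : ∀ n, n + 1 = 2 * k →
    ∑ i ∈ Finset.range n, min (i + 1) (n - i) = k ^ 2 := by
  induction k with
  | zero => intro n hn; omega
  | succ k ih =>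
    intro n hn
    rcases Nat.eq_zero_or_pos k with hk | hk
    · subst hk
      have : n = 1 := by omega
      subst this
      simp
    · have hn' : n = 2 * k + 1 := by omega
      subst hn'
      rw [Finset.sum_range_succ, show 2 * k = (2 * k - 1) + 1 from by omega,
        Finset.sum_range_succ']
      have h0 : ∀ i ∈ Finset.range (2 * k - 1), min (i + 1 + 1) (2 * k - 1 + 1 + 1 - (i + 1))
          = min (i + 1) (2 * k - 1 - i) + 1 := by
        intro i hi
        simp only [Finset.mem_range] at hi
        omega
      rw [Finset.sum_congr rfl h0, Finset.sum_add_distrib, Finset.sum_const,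
        Finset.card_range, ih (2 * k - 1) (by omega)]
      have e1 : min (0 + 1) (2 * k - 1 + 1 + 1 - 0) = 1 := by omega
      have e2 : min (2 * k - 1 + 1 + 1) (2 * k - 1 + 1 + 1 - (2 * k - 1 + 1)) = 1 := by omega
      rw [e1, e2]
      simp only [smul_eq_mul, mul_one]
      have : (k + 1) ^ 2 = k ^ 2 + 2 * k + 1 := by ring
      omega

/-- Let `K` be a field, `n+1 = 2k` even, and `V` an `(n+1)`-dimensional `K`-vector space.
For any subspaces `U_1, …, U_n` and `W_1, …, W_n` of `V` with `dim U_i = dim W_i = i`,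
the sum of Grassmann distances satisfies `Σ_{i=1}^{n} d(U_i, W_i) ≤ k²`.
(Here each `d(U_i,W_i) = (dim(U_i+W_i) - dim(U_i∩W_i))/2`, so the statement is expressed
with both sides multiplied by `2`.) -/
theorem sum_grassmann_distance_le_even {K : Type*} [Field K] {V : Type*} [AddCommGroup V]
    [Module K V] [FiniteDimensional K V] (n k : ℕ) (hnk : n + 1 = 2 * k)
    (hV : finrank K V = n + 1)
    (U W : Fin n → Submodule K V)
    (hU : ∀ i : Fin n, finrank K ↥(U i) = (i : ℕ) + 1)
    (hW : ∀ i : Fin n, finrank K ↥(W i) = (i : ℕ) + 1) :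
    ∑ i : Fin n, (finrank K ↥(U i ⊔ W i) - finrank K ↥(U i ⊓ W i)) ≤ 2 * k ^ 2 := by
  have hterm : ∀ i : Fin n, finrank K ↥(U i ⊔ W i) - finrank K ↥(U i ⊓ W i)
      ≤ 2 * min ((i : ℕ) + 1) (n - (i : ℕ)) := by
    intro i
    have hsum : finrank K ↥(U i ⊔ W i) + finrank K ↥(U i ⊓ W i)
        = finrank K ↥(U i) + finrank K ↥(W i) :=
      Submodule.finrank_sup_add_finrank_inf_eq (U i) (W i)
    have hb : finrank K ↥(U i ⊔ W i) ≤ n + 1 := hV ▸ Submodule.finrank_le (U i ⊔ W i)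
    have ha : finrank K ↥(U i ⊓ W i) ≤ (i : ℕ) + 1 :=
      (hU i) ▸ Submodule.finrank_mono inf_le_left
    have hi : (i : ℕ) < n := i.isLt
    rw [hU i, hW i] at hsum
    omega
  calc ∑ i : Fin n, (finrank K ↥(U i ⊔ W i) - finrank K ↥(U i ⊓ W i))
      ≤ ∑ i : Fin n, 2 * min ((i : ℕ) + 1) (n - (i : ℕ)) :=
        Finset.sum_le_sum fun i _ => hterm i
    _ = 2 * ∑ i ∈ Finset.range n, min (i + 1) (n - i) := by
        rw [Fin.sum_univ_eq_sum_range (fun i => 2 * min (i + 1) (n - i)) n,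
          Finset.mul_sum]
    _ = 2 * k ^ 2 := by rw [sum_min_eq_sq k n hnk]
end

section
/- Let K be a field, let n+1 = 2k+1 be odd, and let V be an (n+1)-dimensional K-vector space. For any subspaces U_1, …, U_n and W_1, …, W_n of V with dim(U_i) = dim(W_i) = i for all i, the sum of Grassmann distances satisfies Σ_{i=1}^{n} d(U_i, W_i) ≤ k(k+1). -/
open Module

private lemma gauss_sum (k : ℕ) : ∑ i ∈ Finset.range k, 2 * (i + 1) = k * (k + 1) := by
  induction k with
  | zero => simp
  | succ m ih => rw [Finset.sum_range_succ, ih]; ring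

private lemma sum_min_bound (k : ℕ) :
    ∑ i ∈ Finset.range (2 * k), min (2 * (i + 1)) (2 * (2 * k - i)) ≤ 2 * (k * (k + 1)) := by
  have hsplit : ∑ i ∈ Finset.Ico 0 k, min (2 * (i + 1)) (2 * (2 * k - i))
      + ∑ i ∈ Finset.Ico k (2 * k), min (2 * (i + 1)) (2 * (2 * k - i))
      = ∑ i ∈ Finset.Ico 0 (2 * k), min (2 * (i + 1)) (2 * (2 * k - i)) :=
    Finset.sum_Ico_consecutive _ (Nat.zero_le k) (by omega)
  have h1 : ∑ i ∈ Finset.Ico 0 k, min (2 * (i + 1)) (2 * (2 * k - i)) ≤ k * (k + 1) := by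
    calc ∑ i ∈ Finset.Ico 0 k, min (2 * (i + 1)) (2 * (2 * k - i))
        ≤ ∑ i ∈ Finset.Ico 0 k, 2 * (i + 1) :=
          Finset.sum_le_sum fun i _ => min_le_left _ _
      _ = k * (k + 1) := by rw [← Finset.range_eq_Ico]; exact gauss_sum k
  have h2 : ∑ i ∈ Finset.Ico k (2 * k), min (2 * (i + 1)) (2 * (2 * k - i)) ≤ k * (k + 1) := by
    calc ∑ i ∈ Finset.Ico k (2 * k), min (2 * (i + 1)) (2 * (2 * k - i))
        ≤ ∑ i ∈ Finset.Ico k (2 * k), 2 * (2 * k - i) :=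
          Finset.sum_le_sum fun i _ => min_le_right _ _
      _ = ∑ j ∈ Finset.range k, 2 * (2 * k - (k + j)) := by
          rw [Finset.sum_Ico_eq_sum_range, Nat.two_mul, Nat.add_sub_cancel]
      _ = ∑ j ∈ Finset.range k, 2 * (k - j) := by
          apply Finset.sum_congr rfl; intro j hj; congr 1; omega
      _ = ∑ j ∈ Finset.range k, 2 * (k - 1 - j + 1) := by
          apply Finset.sum_congr rfl; intro j hj
          rw [Finset.mem_range] at hj; congr 1; omega
      _ = ∑ j ∈ Finset.range k, 2 * (j + 1) := Finset.sum_range_reflect (fun j => 2 * (j + 1)) k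
      _ = k * (k + 1) := gauss_sum k
  calc ∑ i ∈ Finset.range (2 * k), min (2 * (i + 1)) (2 * (2 * k - i))
      = ∑ i ∈ Finset.Ico 0 k, min (2 * (i + 1)) (2 * (2 * k - i))
        + ∑ i ∈ Finset.Ico k (2 * k), min (2 * (i + 1)) (2 * (2 * k - i)) := by
        rw [Finset.range_eq_Ico]; exact hsplit.symm
    _ ≤ k * (k + 1) + k * (k + 1) := Nat.add_le_add h1 h2
    _ = 2 * (k * (k + 1)) := by ring

/-- Let `K` be a field, `n+1 = 2k+1` odd, and `V` an `(n+1)`-dimensional `K`-vector space.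
For any subspaces `U_1, …, U_n` and `W_1, …, W_n` of `V` with `dim U_i = dim W_i = i`,
the sum of Grassmann distances satisfies `Σ_{i=1}^{n} d(U_i, W_i) ≤ k(k+1)`.
(Here each `d(U_i,W_i) = (dim(U_i+W_i) - dim(U_i∩W_i))/2`, so the statement is expressed
with both sides multiplied by `2`.) -/
theorem sum_grassmann_distance_le_odd {K : Type*} [Field K] {V : Type*} [AddCommGroup V]
    [Module K V] [FiniteDimensional K V] (n k : ℕ) (hnk : n + 1 = 2 * k + 1)
    (hV : finrank K V = n + 1)
    (U W : Fin n → Submodule K V)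
    (hU : ∀ i : Fin n, finrank K ↥(U i) = (i : ℕ) + 1)
    (hW : ∀ i : Fin n, finrank K ↥(W i) = (i : ℕ) + 1) :
    ∑ i : Fin n, (finrank K ↥(U i ⊔ W i) - finrank K ↥(U i ⊓ W i)) ≤ 2 * (k * (k + 1)) := by
  have hn : n = 2 * k := by omega
  have hterm : ∀ i : Fin n,
      finrank K ↥(U i ⊔ W i) - finrank K ↥(U i ⊓ W i)
        ≤ min (2 * ((i : ℕ) + 1)) (2 * (n - (i : ℕ))) := by
    intro i
    have hsum : finrank K ↥(U i ⊔ W i) + finrank K ↥(U i ⊓ W i)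
        = finrank K ↥(U i) + finrank K ↥(W i) :=
      Submodule.finrank_sup_add_finrank_inf_eq (U i) (W i)
    rw [hU i, hW i] at hsum
    have hle : finrank K ↥(U i ⊔ W i) ≤ n + 1 := hV ▸ Submodule.finrank_le (U i ⊔ W i)
    have hin : finrank K ↥(U i ⊓ W i) ≤ finrank K ↥(U i ⊔ W i) :=
      Submodule.finrank_mono (le_trans inf_le_left le_sup_left)
    have hi : (i : ℕ) < n := i.isLt
    omega
  calc ∑ i : Fin n, (finrank K ↥(U i ⊔ W i) - finrank K ↥(U i ⊓ W i))
      ≤ ∑ i : Fin n, min (2 * ((i : ℕ) + 1)) (2 * (n - (i : ℕ))) :=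
        Finset.sum_le_sum fun i _ => hterm i
    _ = ∑ i ∈ Finset.range n, min (2 * (i + 1)) (2 * (n - i)) :=
        Fin.sum_univ_eq_sum_range (fun j => min (2 * (j + 1)) (2 * (n - j))) n
    _ ≤ 2 * (k * (k + 1)) := by rw [hn]; exact sum_min_bound k
end

section
/- Let K be a field and let Δ, Λ ∈ U^n(K) be upper triangular n×n matrices. For each 1 ≤ i ≤ n let V_i ≤ K^{n+1} be the row space of the i×(n+1) matrix (I_i | Δ_[i]) and let W_i ≤ K^{n+1} be the row space of (I_i | Λ_[i]). Then Σ_{i=1}^{n} d(V_i, W_i) = frk(Δ − Λ), i.e., the sum of the Grassmann distances equals the flag rank of the difference Δ − Λ. -/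
/-- The space `U^n(K)` of upper triangular `n × n` matrices over `K`,
as a `K`-subspace of the matrix space. -/
def UT (K : Type*) [Field K] (n : ℕ) : Submodule K (Matrix (Fin n) (Fin n) K) where
  carrier := {A | ∀ i j : Fin n, (j : ℕ) < (i : ℕ) → A i j = 0}
  add_mem' := by
    intro a b ha hb i j h
    simp [Matrix.add_apply, ha i j h, hb i j h]
  zero_mem' := by
    intro i j h
    simp
  smul_mem' := by
    intro c a ha i j h
    simp [Matrix.smul_apply, ha i j h]

/-- For `Δ ∈ U^n(K)` and `i : Fin n` (representing the 1-indexed value `i+1`),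
the upper-right corner submatrix `Δ_[i+1] ∈ K^{(i+1) × (n+1-(i+1))}`,
consisting of the entries `Δ_{k,ℓ}` with (1-indexed) `1 ≤ k ≤ i+1`, `i+1 ≤ ℓ ≤ n`. -/
def corner {K : Type*} [Field K] {n : ℕ} (Δ : Matrix (Fin n) (Fin n) K) (i : Fin n) :
    Matrix (Fin ((i : ℕ) + 1)) (Fin (n + 1 - ((i : ℕ) + 1))) K :=
  Matrix.of fun k l =>
    Δ ⟨k, by have := k.isLt; have := i.isLt; omega⟩
      ⟨(i : ℕ) + l, by have := l.isLt; have := i.isLt; omega⟩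

/-- The flag rank of an upper triangular matrix: the sum of the ranks of its
upper-right corner submatrices, `frk Δ = Σ_{i=1}^{n} rank Δ_[i]`. -/
noncomputable def frk {K : Type*} [Field K] {n : ℕ} (Δ : Matrix (Fin n) (Fin n) K) : ℕ :=
  ∑ i : Fin n, (corner Δ i).rank

/-- The block matrix `(I_i | A)` of size `i × m`, for `A ∈ K^{i × (m - i)}`. -/
def Psi {K : Type*} [Field K] {i m : ℕ} (A : Matrix (Fin i) (Fin (m - i)) K) :
    Matrix (Fin i) (Fin m) K :=
  Matrix.of fun r c =>
    if h : (c : ℕ) < i then (if (c : ℕ) = (r : ℕ) then 1 else 0)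
    else A r ⟨(c : ℕ) - i, by have := c.isLt; omega⟩

/-- The row space of a matrix, as a subspace of `K^p`. -/
def rowSpace {K : Type*} [Field K] {m p : ℕ} (M : Matrix (Fin m) (Fin p) K) :
    Submodule K (Fin p → K) :=
  Submodule.span K (Set.range fun r => M r)

open Module

/-!
Write `V = rowSpace (I | A)`, `W = rowSpace (I | B)` and `Z = rowSpace (0 | A - B)`, all inside
`K^m`. Then `V ⊔ W = V ⊔ Z`, and `Z` meets `V` trivially because the projection to the first `i`
coordinates is injective on `V` and kills `Z`. As `dim V = dim W = i` and `dim Z = rank (A - B)`,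
`dim (V ⊔ W) - dim (V ⊓ W) = 2 (dim (V ⊔ W) - i) = 2 rank (A - B)`. Summing over the corners,
which commute with subtraction, gives the flag rank.
-/

section

variable {K : Type*} [Field K]

lemma rowSpace_eq_range_vecMulLinear {m p : ℕ} (M : Matrix (Fin m) (Fin p) K) :
    rowSpace M = LinearMap.range M.vecMulLinear :=
  (range_vecMulLinear M).symm

lemma finrank_rowSpace {m p : ℕ} (M : Matrix (Fin m) (Fin p) K) :
    finrank K (rowSpace M) = M.rank :=
  (Matrix.rank_eq_finrank_span_row M).symm

lemma rowSpace_sup_rowSpace_eq_sup_rowSpace_sub {m p : ℕ} (M N : Matrix (Fin m) (Fin p) K) :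
    rowSpace M ⊔ rowSpace N = rowSpace M ⊔ rowSpace (M - N) := by
  have hM : ∀ r, M r ∈ rowSpace M := fun r => Submodule.subset_span ⟨r, rfl⟩
  have hN : ∀ r, N r ∈ rowSpace N := fun r => Submodule.subset_span ⟨r, rfl⟩
  have hMN : ∀ r, (M - N) r ∈ rowSpace (M - N) := fun r => Submodule.subset_span ⟨r, rfl⟩
  apply le_antisymm <;> refine sup_le le_sup_left (Submodule.span_le.mpr ?_) <;>
    rintro _ ⟨r, rfl⟩
  · show N r ∈ _
    rw [show N r = M r - (M - N) r from (sub_sub_cancel (M r) (N r)).symm]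
    exact sub_mem (Submodule.mem_sup_left (hM r)) (Submodule.mem_sup_right (hMN r))
  · exact sub_mem (Submodule.mem_sup_left (hM r)) (Submodule.mem_sup_right (hN r))

theorem finrank_sup_sub_finrank_inf_eq_two_mul {E : Type*} [AddCommGroup E] [Module K E]
    [FiniteDimensional K E] {V W Z : Submodule K E} (hVW : finrank K V = finrank K W)
    (hsup : V ⊔ W = V ⊔ Z) (hVZ : Disjoint V Z) :
    finrank K ↥(V ⊔ W) - finrank K ↥(V ⊓ W) = 2 * finrank K Z := by
  have hW := Submodule.finrank_sup_add_finrank_inf_eq V W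
  have hZ := Submodule.finrank_sup_add_finrank_inf_eq V Z
  rw [hVZ.eq_bot, finrank_bot, ← hsup] at hZ
  omega

variable {i m : ℕ}

lemma Psi_submatrix_castLE (h : i ≤ m) (A : Matrix (Fin i) (Fin (m - i)) K) :
    (Psi A).submatrix id (Fin.castLE h) = 1 := by
  ext r c
  simp [Psi, Matrix.one_apply, Fin.ext_iff, eq_comm]

lemma rank_Psi (h : i ≤ m) (A : Matrix (Fin i) (Fin (m - i)) K) : (Psi A).rank = i := by
  apply le_antisymm (Matrix.rank_le_height _)
  simpa [Psi_submatrix_castLE h] using Matrix.rank_submatrix_le (Psi A) id (Fin.castLE h)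

lemma Psi_sub_Psi (A B : Matrix (Fin i) (Fin (m - i)) K) :
    Psi A - Psi B = (A - B) * Matrix.of fun (l : Fin (m - i)) (c : Fin m) =>
      if (c : ℕ) = i + l then (1 : K) else 0 := by
  ext r c
  by_cases hc : (c : ℕ) < i
  · simp only [Psi, Matrix.mul_apply, Matrix.sub_apply, Matrix.of_apply, dif_pos hc, sub_self]
    exact (Finset.sum_eq_zero fun l _ => by simp; omega).symm
  · rw [Matrix.mul_apply, Finset.sum_eq_single ⟨c - i, by omega⟩]
    · simp [Psi, hc, if_pos (show (c : ℕ) = i + (c - i) by omega)]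
    · intro l _ hl
      simp [show (c : ℕ) ≠ i + l from fun h => hl (Fin.ext (by simp; omega))]
    · simp

lemma rank_Psi_sub_Psi (h : i ≤ m) (A B : Matrix (Fin i) (Fin (m - i)) K) :
    (Psi A - Psi B).rank = (A - B).rank := by
  apply le_antisymm
  · rw [Psi_sub_Psi]
    exact Matrix.rank_mul_le_left _ _
  · let shift : Fin (m - i) → Fin m := fun l => ⟨i + l, by omega⟩
    have hshift : (Psi A - Psi B).submatrix id shift = A - B := by
      ext r l
      simp [shift, Psi]
    simpa [hshift] using Matrix.rank_submatrix_le (Psi A - Psi B) id shift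

lemma disjoint_rowSpace_Psi_rowSpace_Psi_sub (h : i ≤ m) (A B : Matrix (Fin i) (Fin (m - i)) K) :
    Disjoint (rowSpace (Psi A)) (rowSpace (Psi A - Psi B)) := by
  set π : (Fin m → K) →ₗ[K] Fin i → K := LinearMap.funLeft K K (Fin.castLE h)
  have hπ : ∀ u, π (Matrix.vecMul u (Psi A)) = u := fun u => by
    change Matrix.vecMul u ((Psi A).submatrix id (Fin.castLE h)) = u
    rw [Psi_submatrix_castLE, Matrix.vecMul_one]
  have hker : rowSpace (Psi A - Psi B) ≤ LinearMap.ker π := by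
    refine Submodule.span_le.mpr ?_
    rintro _ ⟨r, rfl⟩
    funext c
    simp [π, Psi]
  rw [Submodule.disjoint_def, rowSpace_eq_range_vecMulLinear]
  rintro _ ⟨u, rfl⟩ hu
  rw [Matrix.vecMulLinear_apply, ← hπ u, show π (Matrix.vecMul u (Psi A)) = 0 from hker hu,
    Matrix.zero_vecMul]

theorem finrank_sup_sub_finrank_inf_rowSpace_Psi (h : i ≤ m)
    (A B : Matrix (Fin i) (Fin (m - i)) K) :
    finrank K ↥(rowSpace (Psi A) ⊔ rowSpace (Psi B)) -
      finrank K ↥(rowSpace (Psi A) ⊓ rowSpace (Psi B)) = 2 * (A - B).rank := by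
  rw [← rank_Psi_sub_Psi h, ← finrank_rowSpace]
  exact finrank_sup_sub_finrank_inf_eq_two_mul
    (by simp only [finrank_rowSpace, rank_Psi h]) (rowSpace_sup_rowSpace_eq_sup_rowSpace_sub _ _)
    (disjoint_rowSpace_Psi_rowSpace_Psi_sub h A B)

lemma corner_sub {n : ℕ} (Δ Λ : Matrix (Fin n) (Fin n) K) (i : Fin n) :
    corner (Δ - Λ) i = corner Δ i - corner Λ i :=
  rfl

end

/-- Both sides are doubled: `d(V_i, W_i) = (dim (V_i + W_i) - dim (V_i ∩ W_i)) / 2`. -/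
theorem sum_grassmann_distance_eq_frk_sub_general {K : Type*} [Field K] {n : ℕ}
    (Δ Λ : Matrix (Fin n) (Fin n) K) :
    ∑ i : Fin n,
        (finrank K ↥(rowSpace (Psi (corner Δ i)) ⊔ rowSpace (Psi (corner Λ i))) -
          finrank K ↥(rowSpace (Psi (corner Δ i)) ⊓ rowSpace (Psi (corner Λ i)))) =
      2 * frk (Δ - Λ) := by
  rw [frk, Finset.mul_sum]
  refine Finset.sum_congr rfl fun i _ => ?_
  rw [corner_sub]
  exact finrank_sup_sub_finrank_inf_rowSpace_Psi (by omega) _ _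

/-- For upper triangular `Δ, Λ ∈ U^n(K)`, with `V_i` the row space of `(I_i | Δ_[i])`
and `W_i` the row space of `(I_i | Λ_[i])`, the sum of the Grassmann distances
`Σ_{i=1}^{n} d(V_i, W_i)` equals the flag rank `frk(Δ - Λ)`.
(Each `d(V_i,W_i) = (dim(V_i+W_i) - dim(V_i∩W_i))/2`, so the statement is expressed
with both sides multiplied by `2`.) -/
theorem sum_grassmann_distance_eq_frk_sub {K : Type*} [Field K] {n : ℕ}
    (Δ Λ : Matrix (Fin n) (Fin n) K) (hΔ : Δ ∈ UT K n) (hΛ : Λ ∈ UT K n) :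
    ∑ i : Fin n,
        (finrank K ↥(rowSpace (Psi (corner Δ i)) ⊔ rowSpace (Psi (corner Λ i))) -
          finrank K ↥(rowSpace (Psi (corner Δ i)) ⊓ rowSpace (Psi (corner Λ i)))) =
      2 * frk (Δ - Λ) :=
  sum_grassmann_distance_eq_frk_sub_general Δ Λ
end

section
/- Let K be a field and for each 1 ≤ i ≤ n let A_i ∈ K^{i×(n+1−i)} be a matrix, and let V_i ≤ K^{n+1} be the row space of (I_i | A_i). Then pr_{i+1}(V_i) ⊆ V_{i+1} holds for all 1 ≤ i ≤ n−1 if and only if there exists an upper triangular matrix Δ ∈ U^n(K) with A_i = Δ_[i] for all i. In particular, the map Δ ↦ (V_1, …, V_n) with V_i the row space of (I_i | Δ_[i]) is a bijection from U^n(K) onto the set of tuples (V_1,…,V_n) of subspaces of K^{n+1} that satisfy pr_{i+1}(V_i) ⊆ V_{i+1} for all i and such that each V_i is the row space of (I_i | A) for some A ∈ K^{i×(n+1−i)}. -/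
/-- The projection `pr_j : K^m → K^m` setting the `j`-th coordinate to zero
and fixing all other coordinates. -/
def pr {K : Type*} [Field K] {m : ℕ} (j : Fin m) : (Fin m → K) →ₗ[K] (Fin m → K) where
  toFun v := fun c => if c = j then 0 else v c
  map_add' := by
    intro a b; funext c; by_cases h : c = j <;> simp [h]
  map_smul' := by
    intro a b; funext c; by_cases h : c = j <;> simp [h]

section RowSpacePsi

variable {K : Type*} [Field K] {p m : ℕ}

lemma psi_apply_castLE (hpm : p ≤ m) (A : Matrix (Fin p) (Fin (m - p)) K) (r s : Fin p) :
    Psi A r (Fin.castLE hpm s) = (1 : Matrix (Fin p) (Fin p) K) r s := by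
  simp [Psi, Matrix.one_apply, Fin.ext_iff, eq_comm]

lemma psi_apply_of_le (A : Matrix (Fin p) (Fin (m - p)) K) (r : Fin p) {c : Fin m}
    (hc : p ≤ c) : Psi A r c = A r ⟨c - p, by omega⟩ := by
  simp [Psi, Nat.not_lt.mpr hc]

lemma eq_sum_smul_psi_of_mem_rowSpace (hpm : p ≤ m) {A : Matrix (Fin p) (Fin (m - p)) K}
    {v : Fin m → K} (hv : v ∈ rowSpace (Psi A)) :
    v = ∑ r, v (Fin.castLE hpm r) • Psi A r := by
  obtain ⟨c, rfl⟩ := (Submodule.mem_span_range_iff_exists_fun K).mp hv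
  congr! with r
  simp [Finset.sum_apply, psi_apply_castLE, Matrix.one_apply]

lemma eq_of_mem_rowSpace_psi (hpm : p ≤ m) {A : Matrix (Fin p) (Fin (m - p)) K}
    {v w : Fin m → K} (hv : v ∈ rowSpace (Psi A)) (hw : w ∈ rowSpace (Psi A))
    (h : ∀ s, v (Fin.castLE hpm s) = w (Fin.castLE hpm s)) : v = w := by
  rw [← sub_eq_zero, eq_sum_smul_psi_of_mem_rowSpace hpm (sub_mem hv hw)]
  simp [h]

lemma rowSpace_psi_injective :
    Function.Injective (fun A : Matrix (Fin p) (Fin (m - p)) K => rowSpace (Psi A)) := by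
  intro A B (hAB : rowSpace (Psi A) = rowSpace (Psi B))
  ext r l
  have hpm : p ≤ m := by have := l.isLt; omega
  have hrow : Psi A r = Psi B r :=
    eq_of_mem_rowSpace_psi hpm (hAB ▸ Submodule.subset_span ⟨r, rfl⟩)
      (Submodule.subset_span ⟨r, rfl⟩) (by simp [psi_apply_castLE])
  simpa [psi_apply_of_le] using congrFun hrow ⟨p + l, by omega⟩

end RowSpacePsi

section Projection

variable {K : Type*} [Field K] {p m : ℕ}

lemma pr_apply (j : Fin m) (v : Fin m → K) (c : Fin m) :
    pr j v c = if c = j then 0 else v c := rfl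

variable (hp : p < m) (A : Matrix (Fin p) (Fin (m - p)) K)
  (B : Matrix (Fin (p + 1)) (Fin (m - (p + 1))) K)

lemma pr_psi_mem_rowSpace_psi_iff (k : Fin p) :
    pr ⟨p, hp⟩ (Psi A k) ∈ rowSpace (Psi B) ↔ pr ⟨p, hp⟩ (Psi A k) = Psi B k.castSucc := by
  refine ⟨fun h => eq_of_mem_rowSpace_psi hp h (Submodule.subset_span ⟨_, rfl⟩) fun s => ?_,
    fun h => h ▸ Submodule.subset_span ⟨_, rfl⟩⟩
  simp only [Psi, pr_apply, Matrix.of_apply, Fin.ext_iff, Fin.val_castLE, Fin.val_castSucc]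
  split_ifs <;> first | rfl | omega

lemma pr_psi_eq_psi_iff (k : Fin p) :
    pr ⟨p, hp⟩ (Psi A k) = Psi B k.castSucc ↔
      ∀ l : Fin (m - (p + 1)), B k.castSucc l = A k ⟨l + 1, by omega⟩ := by
  constructor
  · intro h l
    have := congrFun h ⟨p + 1 + l, by omega⟩
    rw [pr_apply, if_neg (by simp only [Fin.ext_iff]; omega), psi_apply_of_le _ _ (by simp; omega),
      psi_apply_of_le _ _ (by simp)] at this
    convert this.symm using 2 <;> simp only [Fin.ext_iff] <;> omega
  · intro h
    funext c
    simp only [pr_apply, Psi, Matrix.of_apply, Fin.ext_iff, Fin.val_castSucc, h]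
    split_ifs <;> first | rfl | omega | (congr 2; omega)

lemma map_pr_rowSpace_psi_le_iff :
    (rowSpace (Psi A)).map (pr ⟨p, hp⟩) ≤ rowSpace (Psi B) ↔
      ∀ k l, B (Fin.castSucc k) l = A k ⟨l + 1, by omega⟩ := by
  rw [rowSpace, Submodule.map_span_le, Set.forall_mem_range]
  exact forall_congr' fun k =>
    (pr_psi_mem_rowSpace_psi_iff hp A B k).trans (pr_psi_eq_psi_iff hp A B k)

end Projection

section Corner

variable {K : Type*} {n : ℕ}

def CornerCompatible
    (A : (i : Fin n) → Matrix (Fin ((i : ℕ) + 1)) (Fin (n + 1 - ((i : ℕ) + 1))) K) : Prop :=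
  ∀ (i : Fin n) (h : (i : ℕ) + 1 < n) (k : Fin ((i : ℕ) + 1))
    (l : Fin (n + 1 - ((i : ℕ) + 1 + 1))),
    A ⟨i + 1, h⟩ k.castSucc l = A i k ⟨l + 1, by omega⟩

lemma CornerCompatible.apply_eq_apply_zero
    {A : (i : Fin n) → Matrix (Fin ((i : ℕ) + 1)) (Fin (n + 1 - ((i : ℕ) + 1))) K}
    (hA : CornerCompatible A) {i j : Fin n} (k : Fin ((i : ℕ) + 1)) (l : ℕ)
    (hl : l < n + 1 - ((i : ℕ) + 1)) (hj : (j : ℕ) = i + l) :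
    A i k ⟨l, hl⟩ = A j ⟨k, by omega⟩ ⟨0, by omega⟩ := by
  induction l generalizing i with
  | zero => obtain rfl : i = j := Fin.ext hj.symm; rfl
  | succ l ih =>
    rw [← hA i (by omega) k ⟨l, by omega⟩]
    exact ih (i := ⟨i + 1, by omega⟩) k.castSucc _ (by simp only; omega)

lemma cornerCompatible_iff_exists_corner_eq [Field K]
    (A : (i : Fin n) → Matrix (Fin ((i : ℕ) + 1)) (Fin (n + 1 - ((i : ℕ) + 1))) K) :
    CornerCompatible A ↔ ∃ Δ ∈ UT K n, ∀ i, A i = corner Δ i := by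
  constructor
  · intro hA
    refine ⟨fun k j => if h : k ≤ j then A j ⟨k, by omega⟩ ⟨0, by omega⟩ else 0,
      fun k j hjk => dif_neg (by simpa using hjk), fun i => ?_⟩
    ext k l
    simp only [corner, Matrix.of_apply]
    rw [dif_pos (by simp [Fin.le_def]; omega)]
    exact hA.apply_eq_apply_zero k l l.isLt rfl
  · rintro ⟨Δ, -, hA⟩
    obtain rfl : A = fun i => corner Δ i := funext hA
    intro i h k l
    simp only [corner, Matrix.of_apply]
    congr 2
    omega

lemma eq_of_corner_eq [Field K] {Δ Δ' : Matrix (Fin n) (Fin n) K} (hΔ : Δ ∈ UT K n)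
    (hΔ' : Δ' ∈ UT K n) (h : ∀ i, corner Δ i = corner Δ' i) : Δ = Δ' := by
  ext k j
  by_cases hkj : (k : ℕ) ≤ j
  · exact congrFun (congrFun (h j) ⟨k, by omega⟩) ⟨0, by omega⟩
  · rw [hΔ k j (by omega), hΔ' k j (by omega)]

end Corner

/-- Let `V_i` be the row space of `(I_i | A_i)` for matrices `A_i ∈ K^{i×(n+1-i)}`,
`i = 1, …, n`.  Then `pr_{i+1}(V_i) ⊆ V_{i+1}` holds for all `1 ≤ i ≤ n-1` if and only if
there is an upper triangular `Δ ∈ U^n(K)` with `A_i = Δ_[i]` for all `i`.  Moreover the map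
`Δ ↦ (V_1, …, V_n)`, sending `Δ` to the tuple of row spaces of the `(I_i | Δ_[i])`,
is a bijection from `U^n(K)` onto the set of tuples `(V_1, …, V_n)` such that each `V_i`
is the row space of some `(I_i | A)` and `pr_{i+1}(V_i) ⊆ V_{i+1}` for all `i`.
(Here `i : Fin n` encodes the 1-indexed value `i+1`, and the `j`-th coordinate of `K^{n+1}`
is 0-indexed, so 1-indexed `pr_{i+1}` is `pr` at the 0-indexed coordinate `i`.) -/
theorem degenerate_flag_cell_parametrization {K : Type*} [Field K] {n : ℕ} :
    (∀ A : (i : Fin n) → Matrix (Fin ((i : ℕ) + 1)) (Fin (n + 1 - ((i : ℕ) + 1))) K,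
      ((∀ (i : Fin n) (h : (i : ℕ) + 1 < n),
          Submodule.map (pr (⟨(i : ℕ) + 1, by have := i.isLt; omega⟩ : Fin (n + 1)))
              (rowSpace (Psi (A i))) ≤
            rowSpace (Psi (A ⟨(i : ℕ) + 1, h⟩))) ↔
        ∃ Δ ∈ UT K n, ∀ i : Fin n, A i = corner Δ i)) ∧
    Set.BijOn
      (fun (Δ : Matrix (Fin n) (Fin n) K) (i : Fin n) => rowSpace (Psi (corner Δ i)))
      (UT K n)
      {V : Fin n → Submodule K (Fin (n + 1) → K) |
        (∀ i : Fin n, ∃ B : Matrix (Fin ((i : ℕ) + 1)) (Fin (n + 1 - ((i : ℕ) + 1))) K,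
          V i = rowSpace (Psi B)) ∧
        ∀ (i : Fin n) (h : (i : ℕ) + 1 < n),
          Submodule.map (pr (⟨(i : ℕ) + 1, by have := i.isLt; omega⟩ : Fin (n + 1)))
              (V i) ≤ V ⟨(i : ℕ) + 1, h⟩} := by
  have flag_iff := fun A : (i : Fin n) → Matrix (Fin ((i : ℕ) + 1))
      (Fin (n + 1 - ((i : ℕ) + 1))) K =>
    (forall₂_congr fun i h => map_pr_rowSpace_psi_le_iff (by omega) (A i) (A ⟨i + 1, h⟩)).trans
      (cornerCompatible_iff_exists_corner_eq A)
  refine ⟨flag_iff, ?_, ?_, ?_⟩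
  · exact fun Δ hΔ => ⟨fun i => ⟨_, rfl⟩, (flag_iff _).mpr ⟨Δ, hΔ, fun _ => rfl⟩⟩
  · exact fun Δ hΔ Δ' hΔ' h => eq_of_corner_eq hΔ hΔ' fun i => rowSpace_psi_injective (congrFun h i)
  · rintro V ⟨hV, hflag⟩
    choose B hB using hV
    obtain rfl : V = fun i => rowSpace (Psi (B i)) := funext hB
    obtain ⟨Δ, hΔ, hB⟩ := (flag_iff B).mp hflag
    exact ⟨Δ, hΔ, funext fun i => by rw [hB]⟩
end

section
/- Let K be a field and k ≥ 1, and set n = 2k−1 (so n+1 = 2k is even). Then max{ frk(Δ) : Δ ∈ U^n(K) } = k²; that is, frk(Δ) ≤ k² for every upper triangular matrix Δ ∈ U^n(K), and there exists Δ ∈ U^n(K) with frk(Δ) = k². -/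
lemma sum_ite_const (c k N : ℕ) :
    ∑ i ∈ Finset.range N, (if k ≤ i then c else 0) = c * (N - k) := by
  induction N with
  | zero => simp
  | succ N ih =>
    rw [Finset.sum_range_succ, ih]
    rcases le_or_gt k N with h | h
    · rw [if_pos h, show N + 1 - k = (N - k) + 1 from by omega, Nat.mul_succ]
    · rw [if_neg (by omega), Nat.sub_eq_zero_of_le (by omega),
        Nat.sub_eq_zero_of_le (by omega)]
      simp

lemma sum_min_eq (k : ℕ) (hk : 1 ≤ k) :
    ∑ i ∈ Finset.range (2 * k - 1), min (i + 1) (2 * k - 1 - i) = k ^ 2 := by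
  induction k with
  | zero => omega
  | succ k ih =>
    rcases Nat.eq_or_lt_of_le hk with h | h
    · simp [← h]
    · have hk1 : 1 ≤ k := by omega
      have h1 : 2 * (k + 1) - 1 = (2 * k - 1) + 1 + 1 := by omega
      rw [h1, Finset.sum_range_succ, Finset.sum_range_succ]
      have h2 : ∑ i ∈ Finset.range (2 * k - 1), min (i + 1) (2 * k - 1 + 1 + 1 - i)
          = ∑ i ∈ Finset.range (2 * k - 1),
            (min (i + 1) (2 * k - 1 - i) + if k ≤ i then 2 else 0) := by
        refine Finset.sum_congr rfl fun i hi => ?_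
        have := Finset.mem_range.mp hi
        rcases le_or_gt k i with h' | h'
        · rw [if_pos h']; omega
        · rw [if_neg (not_le.mpr h')]; omega
      rw [h2, Finset.sum_add_distrib, ih hk1, sum_ite_const]
      have : k ^ 2 + 2 * k + 1 = (k + 1) ^ 2 := by ring
      omega

lemma le_rank_of_one {K : Type*} [Field K] {a b m : ℕ}
    (A : Matrix (Fin a) (Fin b) K) (f : Fin m → Fin a) (g : Fin m → Fin b)
    (h : ∀ j j' : Fin m, A (f j) (g j') = (1 : Matrix (Fin m) (Fin m) K) j j') :
    m ≤ A.rank := by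
  classical
  set P : Matrix (Fin m) (Fin a) K := Matrix.of fun j r => if f j = r then 1 else 0 with hP
  set Q : Matrix (Fin b) (Fin m) K := Matrix.of fun c j => if g j = c then 1 else 0 with hQ
  have hPA : ∀ (j : Fin m) (c : Fin b), (P * A) j c = A (f j) c := by
    intro j c
    rw [Matrix.mul_apply]
    simp [hP, Matrix.of_apply, ite_mul]
  have hPAQ : P * A * Q = 1 := by
    ext j j'
    rw [Matrix.mul_apply]
    simp only [hPA, hQ, Matrix.of_apply, mul_ite, mul_one, mul_zero]
    rw [Finset.sum_ite_eq _ (g j') (fun c => A (f j) c)]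
    simp [h j j']
  calc m = (1 : Matrix (Fin m) (Fin m) K).rank := by simp
    _ = (P * A * Q).rank := by rw [hPAQ]
    _ ≤ (P * A).rank := Matrix.rank_mul_le_left _ _
    _ ≤ A.rank := Matrix.rank_mul_le_right _ _

/-- Even case `n + 1 = 2k`: the maximum flag rank on `U^n(K)` is exactly `k²`;
every upper triangular matrix has flag rank at most `k²` and some upper triangular
matrix attains `k²`. -/
theorem max_frk_even {K : Type*} [Field K] (k : ℕ) (hk : 1 ≤ k) :
    (∀ Δ ∈ UT K (2 * k - 1), frk Δ ≤ k ^ 2) ∧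
      ∃ Δ ∈ UT K (2 * k - 1), frk Δ = k ^ 2 := by
  have hub : ∀ (Δ : Matrix (Fin (2 * k - 1)) (Fin (2 * k - 1)) K) (i : Fin (2 * k - 1)),
      (corner Δ i).rank ≤ min ((i : ℕ) + 1) (2 * k - 1 - (i : ℕ)) := by
    intro Δ i
    refine le_min ?_ ?_
    · simpa using (corner Δ i).rank_le_card_height
    · have := (corner Δ i).rank_le_card_width
      simp only [Fintype.card_fin] at this
      have hi := i.isLt
      omega
  have hsum : ∀ Δ : Matrix (Fin (2 * k - 1)) (Fin (2 * k - 1)) K, frk Δ ≤ k ^ 2 := by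
    intro Δ
    calc frk Δ ≤ ∑ i : Fin (2 * k - 1), min ((i : ℕ) + 1) (2 * k - 1 - (i : ℕ)) :=
          Finset.sum_le_sum fun i _ => hub Δ i
      _ = ∑ i ∈ Finset.range (2 * k - 1), min (i + 1) (2 * k - 1 - i) :=
          Fin.sum_univ_eq_sum_range (fun i => min (i + 1) (2 * k - 1 - i)) (2 * k - 1)
      _ = k ^ 2 := sum_min_eq k hk
  refine ⟨fun Δ _ => hsum Δ, ?_⟩
  -- witness
  set Δ : Matrix (Fin (2 * k - 1)) (Fin (2 * k - 1)) K :=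
    Matrix.of (fun r c => if (r : ℕ) + (c : ℕ) = 2 * k - 2 ∧ (r : ℕ) ≤ (c : ℕ) then 1 else 0)
    with hΔ
  have hmem : Δ ∈ UT K (2 * k - 1) := by
    intro r c h
    simp only [hΔ, Matrix.of_apply]
    rw [if_neg]
    rintro ⟨_, h2⟩
    omega
  refine ⟨Δ, hmem, le_antisymm (hsum Δ) ?_⟩
  have hlow : ∀ i : Fin (2 * k - 1),
      min ((i : ℕ) + 1) (2 * k - 1 - (i : ℕ)) ≤ (corner Δ i).rank := by
    intro i
    have hi := i.isLt
    set m := min ((i : ℕ) + 1) (2 * k - 1 - (i : ℕ)) with hm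
    have hm1 : m ≤ (i : ℕ) + 1 := min_le_left _ _
    have hm2 : m ≤ 2 * k - 1 - (i : ℕ) := min_le_right _ _
    have hmk : m ≤ k := by omega
    refine le_rank_of_one (corner Δ i)
      (fun j => ⟨(j : ℕ), by have := j.isLt; omega⟩)
      (fun j => ⟨2 * k - 2 - (i : ℕ) - (j : ℕ), by have := j.isLt; omega⟩)
      (fun j j' => ?_)
    have hj := j.isLt
    have hj' := j'.isLt
    simp only [corner, Matrix.of_apply, hΔ, Matrix.one_apply]
    rcases eq_or_ne j j' with rfl | hne
    · rw [if_pos rfl, if_pos]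
      exact ⟨by omega, by omega⟩
    · rw [if_neg hne, if_neg]
      rintro ⟨h1, _⟩
      apply hne
      ext
      omega
  calc k ^ 2 = ∑ i ∈ Finset.range (2 * k - 1), min (i + 1) (2 * k - 1 - i) :=
        (sum_min_eq k hk).symm
    _ = ∑ i : Fin (2 * k - 1), min ((i : ℕ) + 1) (2 * k - 1 - (i : ℕ)) :=
        (Fin.sum_univ_eq_sum_range (fun i => min (i + 1) (2 * k - 1 - i)) (2 * k - 1)).symm
    _ ≤ frk Δ := Finset.sum_le_sum fun i _ => hlow i
end

section
/- Let K be a field and k ≥ 1, and set n = 2k (so n+1 = 2k+1 is odd). Then max{ frk(Δ) : Δ ∈ U^n(K) } = k(k+1); that is, frk(Δ) ≤ k(k+1) for every upper triangular matrix Δ ∈ U^n(K), and there exists Δ ∈ U^n(K) with frk(Δ) = k(k+1). -/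
lemma sumMin (k : ℕ) : ∑ i ∈ Finset.range (2*k), min (i+1) (2*k - i) = k*(k+1) := by
  have h2 : 2*k = k + k := by ring
  rw [h2, Finset.sum_range_add]
  have A : ∑ i ∈ Finset.range k, min (i+1) (k+k-i) = ∑ i ∈ Finset.range k, (i+1) :=
    Finset.sum_congr rfl (fun i hi => by simp only [Finset.mem_range] at hi; omega)
  have B : ∑ i ∈ Finset.range k, min (k+i+1) (k+k-(k+i)) = ∑ i ∈ Finset.range k, (k-i) :=
    Finset.sum_congr rfl (fun i hi => by simp only [Finset.mem_range] at hi; omega)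
  rw [A, B, ← Finset.sum_add_distrib]
  have C : ∑ i ∈ Finset.range k, (i + 1 + (k - i)) = ∑ _i ∈ Finset.range k, (k+1) :=
    Finset.sum_congr rfl (fun i hi => by simp only [Finset.mem_range] at hi; omega)
  rw [C, Finset.sum_const, Finset.card_range, smul_eq_mul]

lemma rank_ge_of_li {K : Type*} [Field K] {m n : Type*} [Fintype m] [Fintype n]
    (A : Matrix m n K) {c : ℕ} (f : Fin c → m)
    (h : LinearIndependent K fun t => A (f t)) : c ≤ A.rank := by
  rw [A.rank_eq_finrank_span_row]
  have h2 := linearIndependent_iff_card_eq_finrank_span.mp h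
  rw [Fintype.card_fin] at h2
  rw [h2, Set.finrank]
  apply Submodule.finrank_mono
  apply Submodule.span_mono
  rintro _ ⟨t, rfl⟩
  exact ⟨f t, rfl⟩

lemma corner_rank_le {K : Type*} [Field K] {k : ℕ} (Δ : Matrix (Fin (2*k)) (Fin (2*k)) K)
    (i : Fin (2*k)) : (corner Δ i).rank ≤ min ((i:ℕ)+1) (2*k - (i:ℕ)) := by
  refine le_min ((corner Δ i).rank_le_card_height.trans_eq (Fintype.card_fin _)) ?_
  refine (corner Δ i).rank_le_card_width.trans ?_
  rw [Fintype.card_fin]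
  have := i.isLt
  omega

/-- Odd case `n + 1 = 2k + 1`: the maximum flag rank on `U^n(K)` is exactly `k(k+1)`;
every upper triangular matrix has flag rank at most `k(k+1)` and some upper triangular
matrix attains `k(k+1)`. -/
theorem max_frk_odd {K : Type*} [Field K] (k : ℕ) (hk : 1 ≤ k) :
    (∀ Δ ∈ UT K (2 * k), frk Δ ≤ k * (k + 1)) ∧
      ∃ Δ ∈ UT K (2 * k), frk Δ = k * (k + 1) := by
  have key : ∀ Δ : Matrix (Fin (2*k)) (Fin (2*k)) K,
      frk Δ ≤ k * (k+1) := by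
    intro Δ
    calc frk Δ ≤ ∑ i : Fin (2*k), min ((i:ℕ)+1) (2*k - (i:ℕ)) :=
          Finset.sum_le_sum fun i _ => corner_rank_le Δ i
      _ = ∑ i ∈ Finset.range (2*k), min (i+1) (2*k - i) :=
          Fin.sum_univ_eq_sum_range (fun i => min (i+1) (2*k - i)) (2*k)
      _ = k * (k+1) := sumMin k
  refine ⟨fun Δ _ => key Δ, ?_⟩
  -- the witness: ones on the `k`-shifted diagonal
  set Δ : Matrix (Fin (2*k)) (Fin (2*k)) K :=
    Matrix.of fun a b => if (b:ℕ) = (a:ℕ) + k then (1:K) else 0 with hΔ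
  have hmem : Δ ∈ UT K (2*k) := by
    intro a b h
    simp only [hΔ, Matrix.of_apply]
    rw [if_neg]
    omega
  refine ⟨Δ, hmem, ?_⟩
  -- rank of each corner equals the min
  have hrank : ∀ i : Fin (2*k), (corner Δ i).rank = min ((i:ℕ)+1) (2*k - (i:ℕ)) := by
    intro i
    refine le_antisymm (corner_rank_le Δ i) ?_
    set c : ℕ := min ((i:ℕ)+1) (2*k - (i:ℕ)) with hc
    have hi := i.isLt
    -- selected rows and target columns
    have hrow : ∀ t : Fin c, (t:ℕ) + ((i:ℕ) - k) < (i:ℕ) + 1 := by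
      intro t; have := t.isLt; omega
    have hcol : ∀ t : Fin c, (t:ℕ) + ((i:ℕ) - k) + k - (i:ℕ) < 2*k + 1 - ((i:ℕ)+1) := by
      intro t; have := t.isLt; omega
    set f : Fin c → Fin ((i:ℕ)+1) := fun t => ⟨(t:ℕ) + ((i:ℕ) - k), hrow t⟩ with hf
    set g : Fin c → Fin (2*k + 1 - ((i:ℕ)+1)) := fun t =>
      ⟨(t:ℕ) + ((i:ℕ) - k) + k - (i:ℕ), hcol t⟩ with hg
    have hginj : Function.Injective g := by
      intro t s hts
      rw [hg] at hts
      simp only [Fin.mk.injEq] at hts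
      have := t.isLt; have := s.isLt
      exact Fin.ext (by omega)
    apply rank_ge_of_li (corner Δ i) f
    have hrows : (fun t => corner Δ i (f t)) =
        fun t => Pi.single (g t) (1:K) := by
      funext t l
      have ht := t.isLt
      have hl := l.isLt
      have hcond : ((i:ℕ) + (l:ℕ) = (t:ℕ) + ((i:ℕ) - k) + k) ↔ l = g t := by
        rw [Fin.ext_iff]
        simp only [hg, Fin.val_mk]
        omega
      simp only [corner, Matrix.of_apply, hΔ, hf, Pi.single_apply]
      rw [if_congr hcond rfl rfl]
    rw [hrows]
    have := (Pi.basisFun K (Fin (2*k + 1 - ((i:ℕ)+1)))).linearIndependent.comp g hginj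
    convert this using 1
    funext t
    rw [Function.comp_apply, Pi.basisFun_apply]
  calc frk Δ = ∑ i : Fin (2*k), min ((i:ℕ)+1) (2*k - (i:ℕ)) :=
        Finset.sum_congr rfl fun i _ => hrank i
    _ = ∑ i ∈ Finset.range (2*k), min (i+1) (2*k - i) :=
        Fin.sum_univ_eq_sum_range (fun i => min (i+1) (2*k - i)) (2*k)
    _ = k * (k+1) := sumMin k
end

section
/- Let K be a field, k ≥ 1, and n = 2k. Let C ≤ U^n(K) be a K-subspace such that every nonzero Δ ∈ C satisfies frk(Δ) ≥ k(k+1). Then dim_K(C) ≤ k+1. -/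
/-
Each corner `Δ_[i]` of an `n × n` matrix has at most `min(i, n + 1 - i)` rows or columns,
so `frk Δ ≤ ∑ᵢ min(i, n + 1 - i)`, which for `n = 2k` equals `k(k+1)`. Hence every nonzero
`Δ ∈ C` attains all these bounds; in particular the middle corner `Δ_[k]`, a `k × (k+1)`
matrix, has full row rank, so its top row `(Δ_{1,k}, …, Δ_{1,2k})` is nonzero. Taking that
row is therefore an injective linear map `C → K^{k+1}`.
-/

theorem Matrix.row_ne_zero_of_rank_eq_card {m n R : Type*} [Fintype m] [Fintype n]
    [CommSemiring R] [StrongRankCondition R] {M : Matrix m n R}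
    (hM : M.rank = Fintype.card m) (r : m) : M r ≠ 0 := by
  classical
  intro hr
  have hsupp : Function.support M.row ⊆ ↑(Finset.univ.erase r) := fun i hi => by
    simpa using fun h : i = r => hi (h ▸ hr)
  have := M.rank_le_card_of_support_subset _ hsupp
  rw [Finset.card_erase_of_mem (Finset.mem_univ r), Finset.card_univ, hM] at this
  have := Fintype.card_pos_iff.mpr ⟨r⟩
  omega

section FlagRank

variable {K : Type*} [Field K] {n : ℕ}

theorem rank_corner_le (Δ : Matrix (Fin n) (Fin n) K) (i : Fin n) :
    (corner Δ i).rank ≤ min ((i : ℕ) + 1) (n - i) := by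
  have hcols := (corner Δ i).rank_le_width
  exact le_min (corner Δ i).rank_le_height (by omega)

theorem frk_le (Δ : Matrix (Fin n) (Fin n) K) :
    frk Δ ≤ ∑ i : Fin n, min ((i : ℕ) + 1) (n - i) :=
  Finset.sum_le_sum fun i _ => rank_corner_le Δ i

theorem rank_corner_eq_of_sum_le_frk {Δ : Matrix (Fin n) (Fin n) K}
    (hΔ : ∑ i : Fin n, min ((i : ℕ) + 1) (n - i) ≤ frk Δ) (i : Fin n) :
    (corner Δ i).rank = min ((i : ℕ) + 1) (n - i) :=
  (Finset.sum_eq_sum_iff_of_le fun i _ => rank_corner_le Δ i).mp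
    ((frk_le Δ).antisymm hΔ) i (Finset.mem_univ i)

def cornerTopRow (i : Fin n) :
    Matrix (Fin n) (Fin n) K →ₗ[K] Fin (n + 1 - ((i : ℕ) + 1)) → K where
  toFun Δ := corner Δ i 0
  map_add' _ _ := rfl
  map_smul' _ _ := rfl

theorem finrank_le_of_rank_corner_eq (C : Submodule K (Matrix (Fin n) (Fin n) K)) (i : Fin n)
    (hC : ∀ Δ ∈ C, Δ ≠ 0 → (corner Δ i).rank = (i : ℕ) + 1) :
    Module.finrank K C ≤ n - i := by
  have hinj : Function.Injective ((cornerTopRow i).comp C.subtype) := by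
    rw [← LinearMap.ker_eq_bot, Submodule.eq_bot_iff]
    intro Δ hΔ
    by_contra hne
    have hrank := hC Δ Δ.2 (by simpa using hne)
    have htop : corner (Δ : Matrix (Fin n) (Fin n) K) i 0 = 0 := LinearMap.mem_ker.mp hΔ
    exact Matrix.row_ne_zero_of_rank_eq_card (by simpa using hrank) 0 htop
  simpa [Nat.add_sub_add_right] using LinearMap.finrank_le_finrank_of_injective hinj

end FlagRank

theorem sum_min_succ_sub_two_mul (k : ℕ) :
    ∑ i : Fin (2 * k), min ((i : ℕ) + 1) (2 * k - i) = k * (k + 1) := by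
  rw [Fin.sum_univ_eq_sum_range (fun i => min (i + 1) (2 * k - i))]
  induction k with
  | zero => rfl
  | succ k ih =>
    have hshift : ∀ i ∈ Finset.range (2 * k),
        min (i + 1 + 1) (2 * k + 2 - (i + 1)) = min (i + 1) (2 * k - i) + 1 := by
      intro i hi
      have := Finset.mem_range.mp hi
      omega
    rw [Nat.mul_succ, Finset.sum_range_succ, Finset.sum_range_succ', Finset.sum_congr rfl hshift,
      Finset.sum_add_distrib, ih]
    simp only [Finset.sum_const, Finset.card_range, smul_eq_mul]
    grind

theorem dim_le_of_maxdist_odd_general {K : Type*} [Field K] (k : ℕ) (hk : 1 ≤ k)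
    (C : Submodule K (Matrix (Fin (2 * k)) (Fin (2 * k)) K))
    (hmin : ∀ Δ ∈ C, Δ ≠ 0 → k * (k + 1) ≤ frk Δ) :
    Module.finrank K ↥C ≤ k + 1 := by
  let mid : Fin (2 * k) := ⟨k - 1, by omega⟩
  have hfull : ∀ Δ ∈ C, Δ ≠ 0 → (corner Δ mid).rank = (mid : ℕ) + 1 := by
    intro Δ hΔ hne
    rw [rank_corner_eq_of_sum_le_frk ((sum_min_succ_sub_two_mul k).trans_le (hmin Δ hΔ hne))]
    simp only [mid]
    omega
  have := finrank_le_of_rank_corner_eq C mid hfull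
  simp only [mid] at this
  omega

/-- Odd case `n + 1 = 2k + 1`: any flag rank metric code `C ≤ U^n(K)` whose nonzero
elements all have flag rank at least `k(k+1)` (i.e. with minimum distance `k(k+1)`)
has dimension at most `k + 1`. -/
theorem dim_le_of_maxdist_odd {K : Type*} [Field K] (k : ℕ) (hk : 1 ≤ k)
    (C : Submodule K (Matrix (Fin (2 * k)) (Fin (2 * k)) K))
    (hC : C ≤ UT K (2 * k))
    (hmin : ∀ Δ ∈ C, Δ ≠ 0 → k * (k + 1) ≤ frk Δ) :
    Module.finrank K ↥C ≤ k + 1 :=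
  dim_le_of_maxdist_odd_general k hk C hmin
end

section
/- Let K be any field and let C ≤ U^4(K) be a K-subspace such that every nonzero Δ ∈ C satisfies frk(Δ) ≥ 5. Then dim_K(C) ≤ 4. -/
lemma rank_vecMulVec_le_one {K m n : Type*} [Field K] [Fintype m] [Fintype n]
    (u : m → K) (v : n → K) : (Matrix.vecMulVec u v).rank ≤ 1 := by
  rw [Matrix.vecMulVec_eq (Fin 1)]
  exact (Matrix.rank_mul_le_left _ _).trans
    ((Matrix.rank_le_card_width _).trans (by simp))

lemma frk_le_four {K : Type*} [Field K] (Δ : Matrix (Fin 4) (Fin 4) K)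
    (h02 : Δ 0 2 = 0) (h03 : Δ 0 3 = 0) (h12 : Δ 1 2 = 0) (h13 : Δ 1 3 = 0) :
    frk Δ ≤ 4 := by
  have h0 : (corner Δ 0).rank ≤ 1 :=
    (Matrix.rank_le_card_height _).trans (by simp)
  have h3 : (corner Δ 3).rank ≤ 1 :=
    (Matrix.rank_le_card_width _).trans (by simp [show (4:ℕ)+1-((3:Fin 4).val+1) = 1 by rfl])
  have h1 : (corner Δ 1).rank ≤ 1 := by
    have : corner Δ 1 = Matrix.vecMulVec
        (fun k : Fin ((1:Fin 4).val + 1) => Δ ⟨k, by omega⟩ 1)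
        (fun l : Fin (4 + 1 - ((1:Fin 4).val + 1)) => if l = ⟨0, by omega⟩ then 1 else 0) := by
      ext k l
      fin_cases k <;> fin_cases l <;>
        simp_all [corner, Matrix.vecMulVec] <;> rfl
    rw [this]; exact rank_vecMulVec_le_one _ _
  have h2 : (corner Δ 2).rank ≤ 1 := by
    have : corner Δ 2 = Matrix.vecMulVec
        (fun k : Fin ((2:Fin 4).val + 1) => if k = ⟨2, by omega⟩ then 1 else 0)
        (fun l : Fin (4 + 1 - ((2:Fin 4).val + 1)) => Δ 2 ⟨2 + l, by omega⟩) := by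
      ext k l
      fin_cases k <;> fin_cases l <;>
        simp_all [corner, Matrix.vecMulVec] <;> rfl
    rw [this]; exact rank_vecMulVec_le_one _ _
  have : frk Δ = (corner Δ 0).rank + (corner Δ 1).rank + (corner Δ 2).rank
      + (corner Δ 3).rank := by
    simp [frk, Fin.sum_univ_four]
  omega

/-- Over any field `K`, a flag rank metric code `C ≤ U^4(K)` all of whose nonzero
elements have flag rank at least `5` has dimension at most `4`. -/
theorem dim_le_four_of_minfrk_five {K : Type*} [Field K]
    (C : Submodule K (Matrix (Fin 4) (Fin 4) K)) (hC : C ≤ UT K 4)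
    (hmin : ∀ Δ ∈ C, Δ ≠ 0 → 5 ≤ frk Δ) :
    Module.finrank K ↥C ≤ 4 := by
  let f : ↥C →ₗ[K] (Fin 4 → K) :=
    { toFun := fun Δ => ![Δ.1 0 2, Δ.1 0 3, Δ.1 1 2, Δ.1 1 3]
      map_add' := by intro a b; ext i; fin_cases i <;> simp
      map_smul' := by intro c a; ext i; fin_cases i <;> simp }
  have hinj : Function.Injective f := by
    rw [← LinearMap.ker_eq_bot, LinearMap.ker_eq_bot']
    intro x hx
    have h02 : x.1 0 2 = 0 := congrFun hx 0
    have h03 : x.1 0 3 = 0 := congrFun hx 1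
    have h12 : x.1 1 2 = 0 := congrFun hx 2
    have h13 : x.1 1 3 = 0 := congrFun hx 3
    by_contra hne
    have hx0 : x.1 ≠ 0 := fun h => hne (Subtype.ext h)
    have h5 := hmin x.1 x.2 hx0
    have h4 := frk_le_four x.1 h02 h03 h12 h13
    omega
  calc Module.finrank K ↥C ≤ Module.finrank K (Fin 4 → K) :=
        LinearMap.finrank_le_finrank_of_injective hinj
    _ = 4 := by simp
end

section
/- Over the field F_3 with three elements, there exists a K-subspace C ≤ U^4(F_3) with dim(C) = 4 such that every nonzero Δ ∈ C satisfies frk(Δ) ≥ 5; in fact the span of the four matrices with rows (1,0,1,1),(0,1,0,0),(0,0,1,1),(0,0,0,0); (0,2,1,0),(0,2,2,0),(0,0,1,0),(0,0,0,1); (0,0,1,0),(0,0,0,1),(0,0,0,0),(0,0,0,0); and (0,0,0,1),(0,0,2,0),(0,0,0,0),(0,0,0,0) is such a subspace. -/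
/-! Over a field, `rank A ≥ k` as soon as some `k × k` minor of `A` is nonzero. Every corner
`Δ_[i]` of a `4 × 4` matrix has rank at most `2`, so its rank is detected by its `1 × 1` and
`2 × 2` minors; this turns `frk Δ ≥ 5` into a finite check of the `80` nonzero codewords.
A positive minimum distance then forces the four generators to be linearly independent, which
gives the dimension. -/

namespace Matrix

variable {K : Type*} [Field K] {m n : Type*} [Fintype n]

theorem card_le_rank_of_det_submatrix_ne_zero {ι : Type*} [Fintype ι] [DecidableEq ι]
    (A : Matrix m n K) (r : ι → m) (c : ι → n) (h : (A.submatrix r c).det ≠ 0) :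
    Fintype.card ι ≤ A.rank := by
  rw [← rank_of_isUnit _ ((isUnit_iff_isUnit_det _).2 h.isUnit)]
  exact rank_submatrix_le A r c

theorem one_le_rank_of_ne_zero {A : Matrix m n K} (h : A ≠ 0) : 1 ≤ A.rank := by
  obtain ⟨i, j, hij⟩ : ∃ i j, A i j ≠ 0 := by
    by_contra! h'
    exact h (ext h')
  simpa using A.card_le_rank_of_det_submatrix_ne_zero (fun _ : Unit => i) (fun _ => j)
    (by simpa using hij)

theorem two_le_rank_of_minor_ne_zero {A : Matrix m n K} {i i' : m} {j j' : n}
    (h : A i j * A i' j' - A i j' * A i' j ≠ 0) : 2 ≤ A.rank := by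
  simpa using A.card_le_rank_of_det_submatrix_ne_zero ![i, i'] ![j, j']
    (by rw [det_fin_two]; simpa using h)

/-- A computable lower bound for `rank` (in fact equal to `min A.rank 2`), so that it can be
evaluated by `decide` on concrete matrices. -/
def smallMinorRank [Fintype m] [DecidableEq K] (A : Matrix m n K) : ℕ :=
  if ∃ (i i' : m) (j j' : n), A i j * A i' j' - A i j' * A i' j ≠ 0 then 2
  else if A ≠ 0 then 1 else 0

theorem smallMinorRank_le_rank [Fintype m] [DecidableEq K] (A : Matrix m n K) :
    A.smallMinorRank ≤ A.rank := by
  unfold smallMinorRank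
  split_ifs with h2 h1
  · obtain ⟨i, i', j, j', h⟩ := h2
    exact two_le_rank_of_minor_ne_zero h
  · exact one_le_rank_of_ne_zero h1
  · exact Nat.zero_le _

end Matrix

theorem mem_UT_of_isUpperTriangular {K : Type*} [Field K] {n : ℕ} {A : Matrix (Fin n) (Fin n) K}
    (hA : A.IsUpperTriangular) : A ∈ UT K n :=
  fun _ _ hij => hA hij

theorem frk_zero {K : Type*} [Field K] {n : ℕ} : frk (0 : Matrix (Fin n) (Fin n) K) = 0 := by
  have hcorner (i : Fin n) : corner (0 : Matrix (Fin n) (Fin n) K) i = 0 := rfl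
  simp [frk, hcorner, Matrix.rank_zero]

theorem sum_smallMinorRank_corner_le_frk {K : Type*} [Field K] [DecidableEq K] {n : ℕ}
    (Δ : Matrix (Fin n) (Fin n) K) : ∑ i, (corner Δ i).smallMinorRank ≤ frk Δ :=
  Finset.sum_le_sum fun i _ => (corner Δ i).smallMinorRank_le_rank

section Weight

variable {K M ι : Type*} [Field K] [AddCommGroup M] [Module K M] [Fintype ι]
  {v : ι → M} {w : M → ℕ} {d : ℕ}

theorem linearIndependent_of_le_weight (hw : w 0 = 0) (hd : 0 < d)
    (h : ∀ c : ι → K, c ≠ 0 → d ≤ w (∑ i, c i • v i)) : LinearIndependent K v := by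
  rw [Fintype.linearIndependent_iff]
  intro c hc
  by_contra! hne
  have := h c (Function.ne_iff.2 hne)
  rw [hc, hw] at this
  omega

theorem le_weight_of_mem_span (h : ∀ c : ι → K, c ≠ 0 → d ≤ w (∑ i, c i • v i))
    {x : M} (hx : x ∈ Submodule.span K (Set.range v)) (hx0 : x ≠ 0) : d ≤ w x := by
  obtain ⟨c, rfl⟩ := Submodule.mem_span_range_iff_exists_fun K |>.1 hx
  refine h c fun hc => hx0 ?_
  simp [hc]

end Weight

def exampleCodeGen : Fin 4 → Matrix (Fin 4) (Fin 4) (ZMod 3) :=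
  ![!![1, 0, 1, 1; 0, 1, 0, 0; 0, 0, 1, 1; 0, 0, 0, 0],
    !![0, 2, 1, 0; 0, 2, 2, 0; 0, 0, 1, 0; 0, 0, 0, 1],
    !![0, 0, 1, 0; 0, 0, 0, 1; 0, 0, 0, 0; 0, 0, 0, 0],
    !![0, 0, 0, 1; 0, 0, 2, 0; 0, 0, 0, 0; 0, 0, 0, 0]]

theorem exampleCodeGen_isUpperTriangular : ∀ k, (exampleCodeGen k).IsUpperTriangular := by
  decide

theorem five_le_frk_sum_smul_exampleCodeGen (c : Fin 4 → ZMod 3) (hc : c ≠ 0) :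
    5 ≤ frk (∑ j, c j • exampleCodeGen j) := by
  have hcheck : ∀ c : Fin 4 → ZMod 3, c ≠ 0 →
      5 ≤ ∑ i, (corner (∑ j, c j • exampleCodeGen j) i).smallMinorRank := by
    decide +kernel
  exact (hcheck c hc).trans (sum_smallMinorRank_corner_le_frk _)

/-- Over `F_3`, the span of the four given upper triangular `4 × 4` matrices is a
flag rank metric code of dimension `4` in `U^4(F_3)` all of whose nonzero elements
have flag rank at least `5`. -/
theorem example_code_over_F3
    (C : Submodule (ZMod 3) (Matrix (Fin 4) (Fin 4) (ZMod 3)))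
    (hC : C = Submodule.span (ZMod 3)
      {!![1, 0, 1, 1; 0, 1, 0, 0; 0, 0, 1, 1; 0, 0, 0, 0],
        !![0, 2, 1, 0; 0, 2, 2, 0; 0, 0, 1, 0; 0, 0, 0, 1],
        !![0, 0, 1, 0; 0, 0, 0, 1; 0, 0, 0, 0; 0, 0, 0, 0],
        !![0, 0, 0, 1; 0, 0, 2, 0; 0, 0, 0, 0; 0, 0, 0, 0]}) :
    C ≤ UT (ZMod 3) 4 ∧ Module.finrank (ZMod 3) ↥C = 4 ∧
      ∀ Δ ∈ C, Δ ≠ 0 → 5 ≤ frk Δ := by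
  have hgens : C = Submodule.span (ZMod 3) (Set.range exampleCodeGen) := by
    simp only [hC, exampleCodeGen, Matrix.range_cons, Matrix.range_empty, Set.union_empty,
      Set.singleton_union]
  subst hgens
  refine ⟨Submodule.span_le.2 (Set.range_subset_iff.2 fun k =>
    mem_UT_of_isUpperTriangular (exampleCodeGen_isUpperTriangular k)), ?_,
    fun Δ hΔ hΔ0 => le_weight_of_mem_span five_le_frk_sum_smul_exampleCodeGen hΔ hΔ0⟩
  rw [finrank_span_eq_card (linearIndependent_of_le_weight frk_zero (by norm_num)
    five_le_frk_sum_smul_exampleCodeGen), Fintype.card_fin]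
end

section
/- Let K be a field, k ≥ 1, and let M ∈ K^{k×k} be invertible. Define Δ ∈ U^{2k−1}(K) by Δ_{r,c} = M_{r, c−k+1} for 1 ≤ r ≤ k and k ≤ c ≤ 2k−1, and Δ_{r,c} = 0 otherwise. Then frk(Δ) = k². -/
/-!
The corner `Δ_[i+1]` meets the block `M` in its first `i + 1` rows when `i < k` (the remaining
columns being zero), and in its last `2k - 1 - i` columns when `i ≥ k - 1` (the remaining rows
being zero). As rows and columns of an invertible matrix are linearly independent, the rank of
`Δ_[i+1]` is `min (i + 1) (2k - 1 - i)`, and these ranks sum to `1 + 2 + ⋯ + k + ⋯ + 2 + 1 = k²`.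
-/

open Finset

theorem sum_range_succ_add_sum_range_succ_eq_sq (n : ℕ) :
    ∑ i ∈ range n, (i + 1) + ∑ i ∈ range (n + 1), (i + 1) = (n + 1) ^ 2 := by
  induction n with
  | zero => simp
  | succ n ih =>
    rw [sum_range_succ _ n, sum_range_succ _ (n + 1)]
    linear_combination ih

theorem sum_range_min_succ_sub_eq_sq (k : ℕ) :
    ∑ i ∈ range (2 * k - 1), min (i + 1) (2 * k - 1 - i) = k ^ 2 := by
  cases k with
  | zero => simp
  | succ n =>
    rw [show 2 * (n + 1) - 1 = (n + 1) + n by omega, sum_range_add]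
    have rising : ∑ i ∈ range (n + 1), min (i + 1) (n + 1 + n - i) = ∑ i ∈ range (n + 1), (i + 1) :=
      sum_congr rfl fun i hi => by rw [mem_range] at hi; omega
    have falling : ∑ j ∈ range n, min (n + 1 + j + 1) (n + 1 + n - (n + 1 + j)) =
        ∑ j ∈ range n, (j + 1) := by
      rw [← sum_range_reflect]
      exact sum_congr rfl fun j hj => by rw [mem_range] at hj; omega
    rw [rising, falling, add_comm, sum_range_succ_add_sum_range_succ_eq_sq]

namespace Matrix

variable {K m n m₀ n₀ : Type*} [Field K] [Fintype m₀] [Fintype n₀]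

theorem rank_submatrix_of_isUnit_of_injective_left [Fintype n] [DecidableEq n] {M : Matrix n n K}
    (hM : IsUnit M) {f : m₀ → n} (hf : Function.Injective f) :
    (M.submatrix f id).rank = Fintype.card m₀ :=
  ((linearIndependent_rows_iff_isUnit.2 hM).comp f hf).rank_matrix

theorem rank_submatrix_of_isUnit_of_injective_right [Fintype n] [DecidableEq n] {M : Matrix n n K}
    (hM : IsUnit M) {g : n₀ → n} (hg : Function.Injective g) :
    (M.submatrix id g).rank = Fintype.card n₀ := by
  rw [← rank_transpose, transpose_submatrix]
  exact rank_submatrix_of_isUnit_of_injective_left ((isUnit_transpose M).2 hM) hg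

end Matrix

def cornerBlock {K : Type*} [Field K] {k : ℕ} (M : Matrix (Fin k) (Fin k) K) :
    Matrix (Fin (2 * k - 1)) (Fin (2 * k - 1)) K :=
  Matrix.of fun r c => if h : (r : ℕ) < k ∧ k - 1 ≤ (c : ℕ) then
    M ⟨r, h.1⟩ ⟨(c : ℕ) - (k - 1), by omega⟩
  else 0

section cornerBlock

variable {K : Type*} [Field K] {k : ℕ} {M : Matrix (Fin k) (Fin k) K}

theorem cornerBlock_apply_of_lt_of_le {r c : Fin (2 * k - 1)} (hr : (r : ℕ) < k)
    (hc : k - 1 ≤ (c : ℕ)) :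
    cornerBlock M r c = M ⟨r, hr⟩ ⟨(c : ℕ) - (k - 1), by omega⟩ :=
  dif_pos ⟨hr, hc⟩

theorem rank_corner_cornerBlock_of_lt (hM : IsUnit M) (i : Fin (2 * k - 1)) (hi : (i : ℕ) < k) :
    (corner (cornerBlock M) i).rank = i + 1 := by
  refine le_antisymm (Matrix.rank_le_height _) ?_
  let rows : Fin (i + 1) → Fin k := fun r => ⟨r, by omega⟩
  let cols : Fin k → Fin (2 * k - 1 + 1 - (i + 1)) := fun j => ⟨k - 1 - i + j, by omega⟩
  have hsub : (corner (cornerBlock M) i).submatrix id cols = M.submatrix rows id := by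
    ext r j
    simp only [corner, Matrix.submatrix_apply, Matrix.of_apply, id]
    rw [cornerBlock_apply_of_lt_of_le (by dsimp only; omega) (by simp only [cols]; omega)]
    congr 1
    ext
    simp only [cols]
    omega
  calc (i : ℕ) + 1 = (M.submatrix rows id).rank := by
        rw [Matrix.rank_submatrix_of_isUnit_of_injective_left hM, Fintype.card_fin]
        intro a b hab; simpa [rows, Fin.ext_iff] using hab
    _ ≤ _ := hsub ▸ Matrix.rank_submatrix_le _ _ _

theorem rank_corner_cornerBlock_of_le (hM : IsUnit M) (i : Fin (2 * k - 1)) (hi : k - 1 ≤ (i : ℕ)) :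
    (corner (cornerBlock M) i).rank = 2 * k - 1 - i := by
  have hwidth : 2 * k - 1 + 1 - ((i : ℕ) + 1) = 2 * k - 1 - i := by omega
  refine le_antisymm (hwidth ▸ Matrix.rank_le_width _) ?_
  let rows : Fin k → Fin (i + 1) := fun r => ⟨r, by omega⟩
  let cols : Fin (2 * k - 1 + 1 - (i + 1)) → Fin k := fun j => ⟨i + j - (k - 1), by omega⟩
  have hsub : (corner (cornerBlock M) i).submatrix rows id = M.submatrix id cols := by
    ext r j
    simp only [corner, Matrix.submatrix_apply, Matrix.of_apply, id]
    rw [cornerBlock_apply_of_lt_of_le (by simp only [rows, Fin.is_lt]) (by dsimp only; omega)]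
  calc 2 * k - 1 - (i : ℕ) = (M.submatrix id cols).rank := by
        rw [Matrix.rank_submatrix_of_isUnit_of_injective_right hM, Fintype.card_fin, hwidth]
        intro a b hab; simp only [cols, Fin.ext_iff] at hab; omega
    _ ≤ _ := hsub ▸ Matrix.rank_submatrix_le _ _ _

theorem rank_corner_cornerBlock (hM : IsUnit M) (i : Fin (2 * k - 1)) :
    (corner (cornerBlock M) i).rank = min ((i : ℕ) + 1) (2 * k - 1 - i) := by
  by_cases hi : (i : ℕ) < k
  · rw [rank_corner_cornerBlock_of_lt hM i hi]; omega
  · rw [rank_corner_cornerBlock_of_le hM i (by omega)]; omega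

theorem frk_cornerBlock (hM : IsUnit M) : frk (cornerBlock M) = k ^ 2 := by
  rw [frk, Fintype.sum_congr _ _ (rank_corner_cornerBlock hM),
    Fin.sum_univ_eq_sum_range (fun i => min (i + 1) (2 * k - 1 - i)),
    sum_range_min_succ_sub_eq_sq]

end cornerBlock

/-- Even case: let `M ∈ K^{k×k}` be invertible and let `Δ ∈ U^{2k-1}(K)` have the block
form with `M` in the upper right corner (1-indexed: `Δ_{r,c} = M_{r, c-k+1}` for
`1 ≤ r ≤ k`, `k ≤ c ≤ 2k-1`, and `Δ_{r,c} = 0` otherwise; here everything is 0-indexed).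
Then `frk Δ = k²`. -/
theorem frk_corner_block_even {K : Type*} [Field K] (k : ℕ)
    (M : Matrix (Fin k) (Fin k) K) (hM : IsUnit M)
    (Δ : Matrix (Fin (2 * k - 1)) (Fin (2 * k - 1)) K)
    (hΔ : ∀ r c : Fin (2 * k - 1),
      Δ r c = if h : (r : ℕ) < k ∧ k - 1 ≤ (c : ℕ) then
          M ⟨r, h.1⟩ ⟨(c : ℕ) - (k - 1), by have := c.isLt; omega⟩
        else 0) :
    frk Δ = k ^ 2 := by
  rw [show Δ = cornerBlock M from Matrix.ext hΔ]
  exact frk_cornerBlock hM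
end

section
/- Let K be a field, k ≥ 1, and let M ∈ K^{k×k} be invertible. Define Δ ∈ U^{2k}(K) by Δ_{r,c} = M_{r, c−k} for 1 ≤ r ≤ k and k+1 ≤ c ≤ 2k, and Δ_{r,c} = 0 otherwise. Then frk(Δ) = k(k+1). -/
section helpers
variable {K : Type*} [Field K]

/-- selection times coselection is identity -/
lemma sel_mul_sel {m n : ℕ} (f : Fin m → Fin n) (hf : Function.Injective f) :
    (1 : Matrix (Fin n) (Fin n) K).submatrix f id *
      (1 : Matrix (Fin n) (Fin n) K).submatrix id f = (1 : Matrix (Fin m) (Fin m) K) := by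
  rw [← Matrix.submatrix_mul _ _ f id f Function.bijective_id, Matrix.one_mul,
    Matrix.submatrix_one f hf]

lemma rank_sel {m n : ℕ} (f : Fin m → Fin n) (hf : Function.Injective f) :
    ((1 : Matrix (Fin n) (Fin n) K).submatrix f id).rank = m := by
  refine le_antisymm (((1 : Matrix (Fin n) (Fin n) K).submatrix f id).rank_le_card_height.trans
    (Fintype.card_fin m).le) ?_
  calc m = ((1 : Matrix (Fin m) (Fin m) K)).rank := by simp
    _ = ((1 : Matrix (Fin n) (Fin n) K).submatrix f id *
          (1 : Matrix (Fin n) (Fin n) K).submatrix id f).rank := by rw [sel_mul_sel f hf]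
    _ ≤ _ := Matrix.rank_mul_le_left _ _

lemma rank_cosel {m n : ℕ} (f : Fin m → Fin n) (hf : Function.Injective f) :
    ((1 : Matrix (Fin n) (Fin n) K).submatrix id f).rank = m := by
  rw [← Matrix.rank_transpose, Matrix.transpose_submatrix, Matrix.transpose_one]
  exact rank_sel f hf

lemma rank_mul_cosel {m n p : ℕ} (A : Matrix (Fin p) (Fin n) K) (g : Fin n → Fin m)
    (hg : Function.Injective g) :
    (A * (1 : Matrix (Fin m) (Fin m) K).submatrix g id).rank = A.rank := by
  refine le_antisymm (Matrix.rank_mul_le_left _ _) ?_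
  calc A.rank = (A * (1 : Matrix (Fin m) (Fin m) K).submatrix g id *
        (1 : Matrix (Fin m) (Fin m) K).submatrix id g).rank := by
        rw [Matrix.mul_assoc, sel_mul_sel g hg, Matrix.mul_one]
    _ ≤ _ := Matrix.rank_mul_le_left _ _

lemma rank_pad_mul {m n p : ℕ} (B : Matrix (Fin n) (Fin p) K) (f : Fin n → Fin m)
    (hf : Function.Injective f) :
    ((1 : Matrix (Fin m) (Fin m) K).submatrix id f * B).rank = B.rank := by
  refine le_antisymm (Matrix.rank_mul_le_right _ _) ?_
  calc B.rank = ((1 : Matrix (Fin m) (Fin m) K).submatrix f id *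
        ((1 : Matrix (Fin m) (Fin m) K).submatrix id f * B)).rank := by
        rw [← Matrix.mul_assoc, sel_mul_sel f hf, Matrix.one_mul]
    _ ≤ _ := Matrix.rank_mul_le_right _ _

lemma sel_mul {m n p : ℕ} (f : Fin m → Fin n) (B : Matrix (Fin n) (Fin p) K) :
    (1 : Matrix (Fin n) (Fin n) K).submatrix f id * B = B.submatrix f id := by
  ext r c
  simp [Matrix.mul_apply, Matrix.one_apply, ite_mul]

lemma mul_cosel {m n p : ℕ} (g : Fin m → Fin n) (B : Matrix (Fin p) (Fin n) K) :
    B * (1 : Matrix (Fin n) (Fin n) K).submatrix id g = B.submatrix id g := by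
  ext r c
  simp [Matrix.mul_apply, Matrix.one_apply, mul_ite]

end helpers

/-- Odd case: let `M ∈ K^{k×k}` be invertible and let `Δ ∈ U^{2k}(K)` have the block
form with `M` in the upper right corner (1-indexed: `Δ_{r,c} = M_{r, c-k}` for
`1 ≤ r ≤ k`, `k+1 ≤ c ≤ 2k`, and `Δ_{r,c} = 0` otherwise; here everything is 0-indexed).
Then `frk Δ = k(k+1)`. -/
theorem frk_corner_block_odd {K : Type*} [Field K] (k : ℕ) (hk : 1 ≤ k)
    (M : Matrix (Fin k) (Fin k) K) (hM : IsUnit M)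
    (Δ : Matrix (Fin (2 * k)) (Fin (2 * k)) K)
    (hΔ : ∀ r c : Fin (2 * k),
      Δ r c = if h : (r : ℕ) < k ∧ k ≤ (c : ℕ) then
          M ⟨r, h.1⟩ ⟨(c : ℕ) - k, by have := c.isLt; omega⟩
        else 0) :
    frk Δ = k * (k + 1) := by
  have hdet : IsUnit M.det := (Matrix.isUnit_iff_isUnit_det M).mp hM
  have key : ∀ i : Fin (2 * k),
      (corner Δ i).rank = if (i : ℕ) < k then (i : ℕ) + 1 else 2 * k - (i : ℕ) := by
    intro i
    have hi2 := i.isLt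
    by_cases hi : (i : ℕ) < k
    · rw [if_pos hi]
      set N := 2 * k + 1 - ((i : ℕ) + 1) with hN
      have hNval : N = 2 * k - (i : ℕ) := by omega
      have hf : Function.Injective (fun r : Fin ((i : ℕ) + 1) => (⟨r, by omega⟩ : Fin k)) := by
        intro a b hab
        simpa [Fin.ext_iff] using hab
      have hg : Function.Injective
          (fun s : Fin k => (⟨k + s - (i : ℕ), by have := s.isLt; omega⟩ : Fin N)) := by
        intro a b hab
        have ha := a.isLt; have hb := b.isLt
        simp only [Fin.ext_iff] at hab ⊢
        omega
      have hfact : corner Δ i =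
          (1 : Matrix (Fin k) (Fin k) K).submatrix
            (fun r : Fin ((i : ℕ) + 1) => (⟨r, by omega⟩ : Fin k)) id * M *
          (1 : Matrix (Fin N) (Fin N) K).submatrix
            (fun s : Fin k => (⟨k + s - (i : ℕ), by have := s.isLt; omega⟩ : Fin N)) id := by
        rw [sel_mul]
        ext r l
        have hr := r.isLt; have hl := l.isLt
        simp only [corner, Matrix.of_apply, hΔ, Matrix.mul_apply, Matrix.submatrix_apply,
          Matrix.one_apply, id_eq, mul_ite, mul_one, mul_zero]
        by_cases hkl : k ≤ (i : ℕ) + (l : ℕ)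
        · rw [dif_pos ⟨by omega, hkl⟩]
          rw [Finset.sum_eq_single (⟨(i : ℕ) + (l : ℕ) - k, by omega⟩ : Fin k)]
          · rw [if_pos (by simp [Fin.ext_iff]; omega)]
          · intro t _ ht
            rw [if_neg]
            intro hc
            apply ht
            have := t.isLt
            simp only [Fin.ext_iff] at hc ⊢
            omega
          · simp
        · rw [dif_neg (by omega)]
          refine (Finset.sum_eq_zero ?_).symm
          intro t _
          rw [if_neg]
          intro hc
          have := t.isLt
          simp only [Fin.ext_iff] at hc
          omega
      rw [hfact, rank_mul_cosel _ _ hg, Matrix.rank_mul_eq_left_of_isUnit_det M _ hdet,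
        rank_sel _ hf]
    · rw [if_neg hi]
      push_neg at hi
      set N := 2 * k + 1 - ((i : ℕ) + 1) with hN
      have hf : Function.Injective
          (fun s : Fin k => (⟨s, by have := s.isLt; omega⟩ : Fin ((i : ℕ) + 1))) := by
        intro a b hab
        simpa [Fin.ext_iff] using hab
      have hg : Function.Injective
          (fun l : Fin N => (⟨(i : ℕ) + l - k, by have := l.isLt; omega⟩ : Fin k)) := by
        intro a b hab
        have ha := a.isLt; have hb := b.isLt
        simp only [Fin.ext_iff] at hab ⊢
        omega
      have hfact : corner Δ i =
          (1 : Matrix (Fin ((i : ℕ) + 1)) (Fin ((i : ℕ) + 1)) K).submatrix id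
            (fun s : Fin k => (⟨s, by have := s.isLt; omega⟩ : Fin ((i : ℕ) + 1))) *
          (M * (1 : Matrix (Fin k) (Fin k) K).submatrix id
            (fun l : Fin N => (⟨(i : ℕ) + l - k, by have := l.isLt; omega⟩ : Fin k))) := by
        rw [mul_cosel]
        ext r l
        have hr := r.isLt; have hl := l.isLt
        simp only [corner, Matrix.of_apply, hΔ, Matrix.mul_apply, Matrix.submatrix_apply,
          Matrix.one_apply, id_eq, ite_mul, one_mul, zero_mul]
        by_cases hrk : (r : ℕ) < k
        · rw [dif_pos ⟨hrk, by omega⟩]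
          rw [Finset.sum_eq_single (⟨(r : ℕ), hrk⟩ : Fin k)]
          · rw [if_pos (by simp [Fin.ext_iff])]
          · intro t _ ht
            rw [if_neg]
            intro hc
            apply ht
            simp only [Fin.ext_iff] at hc ⊢
            omega
          · simp
        · rw [dif_neg (by omega)]
          refine (Finset.sum_eq_zero ?_).symm
          intro t _
          rw [if_neg]
          intro hc
          have := t.isLt
          simp only [Fin.ext_iff] at hc
          omega
      rw [hfact, rank_pad_mul _ _ hf, Matrix.rank_mul_eq_right_of_isUnit_det M _ hdet,
        rank_cosel _ hg]
      omega
  rw [frk]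
  simp only [key]
  rw [Fin.sum_univ_eq_sum_range (fun i => if i < k then i + 1 else 2 * k - i)]
  rw [Finset.range_eq_Ico, ← Finset.sum_Ico_consecutive _ (Nat.zero_le k) (by omega : k ≤ 2 * k)]
  rw [← Finset.range_eq_Ico, Finset.sum_Ico_eq_sum_range]
  have h1 : ∀ x ∈ Finset.range k, (if x < k then x + 1 else 2 * k - x) = x + 1 := by
    intro x hx
    rw [if_pos (Finset.mem_range.mp hx)]
  have h2 : ∀ x ∈ Finset.range (2 * k - k),
      (if k + x < k then k + x + 1 else 2 * k - (k + x)) = k - x := by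
    intro x hx
    rw [if_neg (by omega)]
    omega
  rw [Finset.sum_congr rfl h1, Finset.sum_congr rfl h2]
  have h3 : 2 * k - k = k := by omega
  rw [h3, ← Finset.sum_add_distrib]
  have h4 : ∀ x ∈ Finset.range k, x + 1 + (k - x) = k + 1 := by
    intro x hx
    have := Finset.mem_range.mp hx
    omega
  rw [Finset.sum_congr rfl h4, Finset.sum_const, Finset.card_range, smul_eq_mul]
end

section
/- Let K be a field and Δ ∈ U^n(K). For each 1 ≤ i ≤ n let U_i ≤ K^{n+1} be the span of the first i rows of the unitriangular matrix Φ(Δ), and let E_i ≤ K^{n+1} be the span of the first i standard basis vectors e_1, …, e_i. Then Σ_{i=1}^{n} d(U_i, E_i) = frk(Δ), where d is the Grassmann distance. -/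
/-- The unitriangular `(n+1) × (n+1)` matrix `Φ(Δ)` attached to `Δ ∈ U^n(K)`:
`Φ(Δ)_{i,i} = 1`, `Φ(Δ)_{i,j+1} = Δ_{i,j}` for `1 ≤ i ≤ j ≤ n` (1-indexed), and all
other entries `0`. -/
def Phi {K : Type*} [Field K] {n : ℕ} (Δ : Matrix (Fin n) (Fin n) K) :
    Matrix (Fin (n + 1)) (Fin (n + 1)) K :=
  Matrix.of fun r c =>
    if (r : ℕ) = (c : ℕ) then 1
    else if h : (r : ℕ) < (c : ℕ) then
      Δ ⟨r, by have := c.isLt; omega⟩ ⟨(c : ℕ) - 1, by have := c.isLt; omega⟩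
    else 0

open Module

lemma aux_rank_nullity {K V W : Type*} [Field K] [AddCommGroup V] [Module K V]
    [AddCommGroup W] [Module K W] [FiniteDimensional K V]
    (f : V →ₗ[K] W) (p : Submodule K V) :
    finrank K ↥(p.map f) + finrank K ↥(p ⊓ LinearMap.ker f) = finrank K ↥p := by
  have h := LinearMap.finrank_range_add_finrank_ker (f.domRestrict p)
  rw [LinearMap.range_domRestrict, LinearMap.ker_domRestrict] at h
  have e : finrank K ↥(Submodule.comap p.subtype (LinearMap.ker f)) =
      finrank K ↥(p ⊓ LinearMap.ker f) := by
    rw [← Submodule.map_comap_subtype]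
    exact (Submodule.equivMapOfInjective p.subtype p.injective_subtype _).finrank_eq
  rw [e] at h
  simpa using h

lemma isUnit_Phi {K : Type*} [Field K] {n : ℕ} (Δ : Matrix (Fin n) (Fin n) K) :
    IsUnit (Phi Δ) := by
  rw [Matrix.isUnit_iff_isUnit_det]
  have ht : (Phi Δ).BlockTriangular id := by
    intro r c h
    simp only [id] at h
    simp only [Phi, Matrix.of_apply]
    rw [if_neg (by omega), dif_neg (by omega)]
  rw [Matrix.det_of_upperTriangular ht]
  have : ∀ j : Fin (n + 1), Phi Δ j j = 1 := by
    intro j; simp [Phi]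
  simp [this]

lemma key_lemma {K : Type*} [Field K] {n : ℕ} (Δ : Matrix (Fin n) (Fin n) K) (i : Fin n) :
    finrank K ↥(Submodule.span K {v | ∃ r : Fin (n + 1), (r : ℕ) ≤ (i : ℕ) ∧ v = Phi Δ r} ⊔
        Submodule.span K {v | ∃ r : Fin (n + 1), (r : ℕ) ≤ (i : ℕ) ∧ v = Pi.single r (1 : K)}) -
      finrank K ↥(Submodule.span K {v | ∃ r : Fin (n + 1), (r : ℕ) ≤ (i : ℕ) ∧ v = Phi Δ r} ⊓
        Submodule.span K {v | ∃ r : Fin (n + 1), (r : ℕ) ≤ (i : ℕ) ∧ v = Pi.single r (1 : K)}) =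
      2 * (corner Δ i).rank := by
  classical
  have hi : (i : ℕ) + 1 ≤ n + 1 := by have := i.isLt; omega
  set Usp := Submodule.span K {v | ∃ r : Fin (n + 1), (r : ℕ) ≤ (i : ℕ) ∧ v = Phi Δ r} with hUsp
  set Esp := Submodule.span K
    {v | ∃ r : Fin (n + 1), (r : ℕ) ≤ (i : ℕ) ∧ v = Pi.single r (1 : K)} with hEsp
  set g : Fin (n + 1 - ((i : ℕ) + 1)) → Fin (n + 1) :=
    fun l => ⟨(i : ℕ) + 1 + l, by have := l.isLt; omega⟩ with hg
  set π : (Fin (n + 1) → K) →ₗ[K] (Fin (n + 1 - ((i : ℕ) + 1)) → K) :=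
    LinearMap.funLeft K K g with hπ
  -- the two families
  set u : Fin ((i : ℕ) + 1) → (Fin (n + 1) → K) := fun k => Phi Δ (Fin.castLE hi k) with hu
  set e : Fin ((i : ℕ) + 1) → (Fin (n + 1) → K) :=
    fun k => Pi.single (Fin.castLE hi k) (1 : K) with he
  -- U is spanned by `u`
  have hUset : {v | ∃ r : Fin (n + 1), (r : ℕ) ≤ (i : ℕ) ∧ v = Phi Δ r} = Set.range u := by
    ext v
    constructor
    · rintro ⟨r, hr, rfl⟩
      exact ⟨⟨r, by omega⟩, by congr 1⟩
    · rintro ⟨k, rfl⟩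
      exact ⟨Fin.castLE hi k, by simpa using by omega, rfl⟩
  have hEset : {v | ∃ r : Fin (n + 1), (r : ℕ) ≤ (i : ℕ) ∧ v = Pi.single r (1 : K)} =
      Set.range e := by
    ext v
    constructor
    · rintro ⟨r, hr, rfl⟩
      exact ⟨⟨r, by omega⟩, by congr 1⟩
    · rintro ⟨k, rfl⟩
      exact ⟨Fin.castLE hi k, by simpa using by omega, rfl⟩
  -- E is the kernel of π
  have hker : Esp = LinearMap.ker π := by
    apply le_antisymm
    · rw [hEsp, Submodule.span_le]
      rintro v ⟨r, hr, rfl⟩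
      simp only [SetLike.mem_coe, LinearMap.mem_ker]
      funext l
      simp only [hπ, LinearMap.funLeft_apply, Pi.zero_apply]
      apply Pi.single_eq_of_ne
      intro hrg
      have : (r : ℕ) = (i : ℕ) + 1 + l := by rw [← hrg]
      omega
    · intro v hv
      rw [LinearMap.mem_ker] at hv
      have hv' : ∀ l : Fin (n + 1 - ((i : ℕ) + 1)), v (g l) = 0 := by
        intro l
        have := congrFun hv l
        simpa [hπ, LinearMap.funLeft_apply] using this
      rw [← Finset.univ_sum_single v]
      apply Submodule.sum_mem
      intro r _
      by_cases hr : (r : ℕ) ≤ (i : ℕ)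
      · have hs : (Pi.single r (1 : K) : Fin (n + 1) → K) ∈ Esp :=
          Submodule.subset_span ⟨r, hr, rfl⟩
        have hmem := Submodule.smul_mem Esp (v r) hs
        have heq : (v r) • (Pi.single r (1 : K) : Fin (n + 1) → K) = Pi.single r (v r) := by
          funext j; by_cases h : j = r <;> simp [Pi.single_apply, h]
        rwa [heq] at hmem
      · have hl : (r : ℕ) - ((i : ℕ) + 1) < n + 1 - ((i : ℕ) + 1) := by
          have := r.isLt; omega
        have : v r = 0 := by
          have h0 := hv' ⟨(r : ℕ) - ((i : ℕ) + 1), hl⟩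
          have : g ⟨(r : ℕ) - ((i : ℕ) + 1), hl⟩ = r := by
            apply Fin.ext; simp [hg]; omega
          rwa [this] at h0
        rw [this, Pi.single_zero]
        exact Submodule.zero_mem _
  -- linear independence
  have liu : LinearIndependent K u := by
    have := Matrix.linearIndependent_rows_iff_isUnit.2 (isUnit_Phi Δ)
    exact this.comp (Fin.castLE hi) (Fin.castLE_injective hi)
  have lie : LinearIndependent K e := by
    have hb : LinearIndependent K fun r : Fin (n + 1) => Pi.single r (1 : K) := by
      have h0 := (Pi.basisFun K (Fin (n + 1))).linearIndependent
      have h2 : (⇑(Pi.basisFun K (Fin (n + 1)))) = fun r : Fin (n + 1) => Pi.single r (1 : K) :=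
        funext fun r => Pi.basisFun_apply K (Fin (n + 1)) r
      rwa [h2] at h0
    exact hb.comp (Fin.castLE hi) (Fin.castLE_injective hi)
  have hUrank : finrank K ↥Usp = (i : ℕ) + 1 := by
    rw [hUsp, hUset, finrank_span_eq_card liu, Fintype.card_fin]
  have hErank : finrank K ↥Esp = (i : ℕ) + 1 := by
    rw [hEsp, hEset, finrank_span_eq_card lie, Fintype.card_fin]
  -- image of U under π is the row space of the corner
  have hπu : ∀ k, π (u k) = corner Δ i k := by
    intro k
    funext l
    simp only [hπ, LinearMap.funLeft_apply, hu]
    have hne : ((Fin.castLE hi k : Fin (n + 1)) : ℕ) ≠ (g l : ℕ) := by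
      simp [hg]; omega
    have hlt : ((Fin.castLE hi k : Fin (n + 1)) : ℕ) < (g l : ℕ) := by
      simp [hg]; omega
    simp only [Phi, Matrix.of_apply]
    rw [if_neg hne, dif_pos hlt]
    show Δ _ _ = corner Δ i k l
    simp only [corner, Matrix.of_apply]
    congr 1 <;> apply Fin.ext <;> simp [hg] <;> omega
  have hmapU : Usp.map π = Submodule.span K (Set.range (corner Δ i)) := by
    rw [hUsp, hUset, Submodule.map_span]
    congr 1
    rw [← Set.range_comp]
    exact congrArg Set.range (funext hπu)
  have hmaprank : finrank K ↥(Usp.map π) = (corner Δ i).rank := by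
    rw [hmapU]
    exact (Matrix.rank_eq_finrank_span_row _).symm
  -- rank-nullity computations
  have h1 := aux_rank_nullity π (Usp ⊔ Esp)
  have hmapE : Esp.map π = ⊥ := by
    rw [eq_bot_iff]
    rintro x ⟨y, hy, rfl⟩
    simp only [SetLike.mem_coe] at hy
    rw [hker, LinearMap.mem_ker] at hy
    simp [hy]
  rw [Submodule.map_sup, hmapE, sup_bot_eq, ← hker,
    inf_eq_right.mpr (le_sup_right : Esp ≤ Usp ⊔ Esp), hmaprank, hErank] at h1
  have h2 := aux_rank_nullity π Usp
  rw [← hker, hmaprank, hUrank] at h2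
  omega


/-- For `Δ ∈ U^n(K)`, let `U_i ≤ K^{n+1}` be the span of the first `i` rows of the
unitriangular matrix `Φ(Δ)` and `E_i` the span of the first `i` standard basis vectors.
Then `Σ_{i=1}^{n} d(U_i, E_i) = frk Δ`, where `d` is the Grassmann distance
`d(U,W) = (dim(U+W) - dim(U∩W))/2`; the statement is expressed with both sides
multiplied by `2`. -/
theorem sum_grassmann_distance_flag_to_standard {K : Type*} [Field K] {n : ℕ}
    (Δ : Matrix (Fin n) (Fin n) K) (hΔ : Δ ∈ UT K n)
    (U E : Fin n → Submodule K (Fin (n + 1) → K))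
    (hU : ∀ i : Fin n, U i =
      Submodule.span K {v | ∃ r : Fin (n + 1), (r : ℕ) ≤ (i : ℕ) ∧ v = Phi Δ r})
    (hE : ∀ i : Fin n, E i =
      Submodule.span K {v | ∃ r : Fin (n + 1), (r : ℕ) ≤ (i : ℕ) ∧ v = Pi.single r (1 : K)}) :
    ∑ i : Fin n, (finrank K ↥(U i ⊔ E i) - finrank K ↥(U i ⊓ E i)) = 2 * frk Δ := by
  rw [frk, Finset.mul_sum]
  apply Finset.sum_congr rfl
  intro i _
  rw [hU i, hE i]
  exact key_lemma Δ i
end
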